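/- Suppose the Banach space 𝒳 has RMF_p with respect to the filtration of standard dyadic cubes on ℝⁿ for some p ∈ (1,∞). Then there exists a constant C such that for every f ∈ L^1(ℝⁿ;𝒳) and every λ > 0, the Lebesgue measure of {ξ ∈ ℝⁿ : M_R f(ξ) > λ} is at most (C/λ)‖f‖_{L^1(ℝⁿ;𝒳)}. -/

import Mathlib

open MeasureTheory Finset Set
open scoped ENNReal NNReal

noncomputable section

namespace RMF

open scoped Classical

universe u

/-- The average `2^{-N} ∑_{ε ∈ {-1,1}^N} ‖∑ⱼ εⱼ • xⱼ‖²` over all choices of signs. -/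
def radAvg {E : Type*} [NormedAddCommGroup E] [NormedSpace ℝ E] {N : ℕ}
    (x : Fin N → E) : ℝ :=
  (2 ^ N : ℝ)⁻¹ * ∑ ε : Fin N → Bool, ‖∑ j, (if ε j then (1 : ℝ) else -1) • x j‖ ^ 2

/-- `E` has type `p`. -/
def HasType (E : Type*) [NormedAddCommGroup E] [NormedSpace ℝ E] (p : ℝ) : Prop :=
  ∃ C : ℝ, 0 ≤ C ∧ ∀ (N : ℕ) (x : Fin N → E),
    Real.sqrt (radAvg x) ≤ C * (∑ j, ‖x j‖ ^ p) ^ (1 / p)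

/-- `E` has cotype `q`. -/
def HasCotype (E : Type*) [NormedAddCommGroup E] [NormedSpace ℝ E] (q : ℝ) : Prop :=
  ∃ C : ℝ, 0 ≤ C ∧ ∀ (N : ℕ) (x : Fin N → E),
    (∑ j, ‖x j‖ ^ q) ^ (1 / q) ≤ C * Real.sqrt (radAvg x)

/-- `C` is an R-bound for the set `S` of vectors (scalar test sequences). -/
def IsRBound {𝒳 : Type*} [NormedAddCommGroup 𝒳] [NormedSpace ℝ 𝒳]
    (S : Set 𝒳) (C : ℝ) : Prop :=
  0 ≤ C ∧ ∀ (N : ℕ) (y : Fin N → 𝒳) (l : Fin N → ℝ), (∀ j, y j ∈ S) →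
    radAvg (fun j => l j • y j) ≤ C ^ 2 * radAvg l

/-- The R-bound `𝓡(S) ∈ [0,∞]` of a set of vectors. -/
def Rbound {𝒳 : Type*} [NormedAddCommGroup 𝒳] [NormedSpace ℝ 𝒳] (S : Set 𝒳) : ℝ≥0∞ :=
  sInf {c : ℝ≥0∞ | ∃ r : ℝ, IsRBound S r ∧ c = ENNReal.ofReal r}

/-- `C` is an R-bound for the family `S` of operators. -/
def IsRBoundOp {H E : Type*} [NormedAddCommGroup H] [NormedSpace ℝ H]
    [NormedAddCommGroup E] [NormedSpace ℝ E] (S : Set (H →L[ℝ] E)) (C : ℝ) : Prop :=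
  0 ≤ C ∧ ∀ (N : ℕ) (T : Fin N → H →L[ℝ] E) (x : Fin N → H), (∀ j, T j ∈ S) →
    radAvg (fun j => T j (x j)) ≤ C ^ 2 * radAvg x

/-- The R-bound `𝓡(S) ∈ [0,∞]` of a family of operators. -/
def RboundOp {H E : Type*} [NormedAddCommGroup H] [NormedSpace ℝ H]
    [NormedAddCommGroup E] [NormedSpace ℝ E] (S : Set (H →L[ℝ] E)) : ℝ≥0∞ :=
  sInf {c : ℝ≥0∞ | ∃ r : ℝ, IsRBoundOp S r ∧ c = ENNReal.ofReal r}

/-- The average of `f` over the standard dyadic interval of generation `j` containing `ξ`. -/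
def dyAvg {𝒳 : Type*} [NormedAddCommGroup 𝒳] [NormedSpace ℝ 𝒳] (f : ℝ → 𝒳) (j : ℤ)
    (ξ : ℝ) : 𝒳 :=
  ((2 : ℝ) ^ j) • ∫ t in Set.Ico ((⌊(2 : ℝ) ^ j * ξ⌋ : ℝ) / (2 : ℝ) ^ j)
      (((⌊(2 : ℝ) ^ j * ξ⌋ : ℝ) + 1) / (2 : ℝ) ^ j), f t

/-- The standard dyadic cube of generation `j` containing `ξ` in `ℝⁿ`. -/
def dyCube (n : ℕ) (j : ℤ) (ξ : Fin n → ℝ) : Set (Fin n → ℝ) :=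
  {η | ∀ i, ⌊(2 : ℝ) ^ j * η i⌋ = ⌊(2 : ℝ) ^ j * ξ i⌋}

/-- The average of `f` over the standard dyadic cube of generation `j` containing `ξ`. -/
def cubeAvg {n : ℕ} {𝒳 : Type*} [NormedAddCommGroup 𝒳] [NormedSpace ℝ 𝒳]
    (f : (Fin n → ℝ) → 𝒳) (j : ℤ) (ξ : Fin n → ℝ) : 𝒳 :=
  ((2 : ℝ) ^ (j * (n : ℤ))) • ∫ η in dyCube n j ξ, f η

/-- The Rademacher maximal function w.r.t. the standard dyadic cubes in `ℝⁿ`. -/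
def MRcube {n : ℕ} {𝒳 : Type*} [NormedAddCommGroup 𝒳] [NormedSpace ℝ 𝒳]
    (f : (Fin n → ℝ) → 𝒳) (ξ : Fin n → ℝ) : ℝ≥0∞ :=
  Rbound {y : 𝒳 | ∃ j : ℤ, y = cubeAvg f j ξ}

/-- The Rademacher maximal function w.r.t. the dyadic intervals of `[0,1)`. -/
def MRdyadic01 {𝒳 : Type*} [NormedAddCommGroup 𝒳] [NormedSpace ℝ 𝒳]
    (f : ℝ → 𝒳) (ξ : ℝ) : ℝ≥0∞ :=
  Rbound {y : 𝒳 | ∃ j : ℕ, y = dyAvg f (j : ℤ) ξ}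

/-- The operator-valued Rademacher maximal function w.r.t. the standard dyadic
intervals on `ℝ`. -/
def MRlineOp {H E : Type*} [NormedAddCommGroup H] [NormedSpace ℝ H]
    [NormedAddCommGroup E] [NormedSpace ℝ E] (f : ℝ → (H →L[ℝ] E)) (ξ : ℝ) : ℝ≥0∞ :=
  RboundOp {T : H →L[ℝ] E | ∃ j : ℤ, T = dyAvg f j ξ}

/-- The operator-valued Rademacher maximal function w.r.t. the dyadic intervals
of `[0,1)`. -/
def MRdyadic01Op {H E : Type*} [NormedAddCommGroup H] [NormedSpace ℝ H]
    [NormedAddCommGroup E] [NormedSpace ℝ E] (f : ℝ → (H →L[ℝ] E)) (ξ : ℝ) : ℝ≥0∞ :=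
  RboundOp {T : H →L[ℝ] E | ∃ j : ℕ, T = dyAvg f (j : ℤ) ξ}

/-- The Rademacher maximal function w.r.t. a family of sub-σ-algebras. -/
def MRfilt {𝒳 : Type*} [NormedAddCommGroup 𝒳] [NormedSpace ℝ 𝒳] [CompleteSpace 𝒳]
    {Ω ι : Type*} [m0 : MeasurableSpace Ω] (μ : Measure Ω) (m : ι → MeasurableSpace Ω)
    (f : Ω → 𝒳) (ξ : Ω) : ℝ≥0∞ :=
  Rbound {y : 𝒳 | ∃ j : ι, y = (μ[f| m j]) ξ}

/-- `𝒳` has `RMF_p` with constant `C` w.r.t. the family `m` of sub-σ-algebras on `(Ω, μ)`. -/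
def RMFpWith (𝒳 : Type*) [NormedAddCommGroup 𝒳] [NormedSpace ℝ 𝒳] [CompleteSpace 𝒳]
    (p C : ℝ) {Ω ι : Type*} [m0 : MeasurableSpace Ω] (μ : Measure Ω)
    (m : ι → MeasurableSpace Ω) : Prop :=
  ∀ f : Ω → 𝒳, MemLp f (ENNReal.ofReal p) μ →
    (∫⁻ ξ, MRfilt μ m f ξ ^ p ∂μ) ^ (1 / p) ≤
      ENNReal.ofReal C * eLpNorm f (ENNReal.ofReal p) μ

/-- A measure is divisible if any set of positive measure contains subsets of any
prescribed fraction of its measure. -/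
def Divisible {Ω : Type*} [MeasurableSpace Ω] (μ : Measure Ω) : Prop :=
  ∀ A : Set Ω, MeasurableSet A → 0 < μ A → ∀ c : ℝ, 0 < c → c < 1 →
    ∃ B : Set Ω, MeasurableSet B ∧ B ⊆ A ∧ μ B = ENNReal.ofReal c * μ A

/-- A Haar filtration on `(Ω, μ)`: `part j` is the generating partition of the
`(j+1)`-st σ-algebra of the filtration (so it has `j + 2` members), and each
partition arises from the previous one by splitting the set `splitSet j` into the
two pieces `piece1 j` and `piece2 j` of positive measure; `part 0` itself arises by
splitting `Ω` in two. -/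
structure HaarSystem (Ω : Type*) [m0 : MeasurableSpace Ω] (μ : Measure Ω) where
  part : ℕ → Finset (Set Ω)
  card_part : ∀ j, (part j).card = j + 2
  meas : ∀ j, ∀ A ∈ part j, MeasurableSet A
  disj : ∀ j, ∀ A ∈ part j, ∀ B ∈ part j, A ≠ B → Disjoint A B
  cover : ∀ j, ⋃₀ (↑(part j) : Set (Set Ω)) = Set.univ
  pos : ∀ j, ∀ A ∈ part j, 0 < μ A
  splitSet : ℕ → Set Ω
  piece1 : ℕ → Set Ω
  piece2 : ℕ → Set Ω
  splitSet_mem : ∀ j, splitSet j ∈ part j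
  union_pieces : ∀ j, piece1 j ∪ piece2 j = splitSet j
  disj_pieces : ∀ j, Disjoint (piece1 j) (piece2 j)
  part_succ : ∀ j, part (j + 1) =
    insert (piece1 j) (insert (piece2 j) ((part j).erase (splitSet j)))

/-- The σ-algebras of a Haar filtration. -/
def HaarSystem.salg {Ω : Type*} [m0 : MeasurableSpace Ω] {μ : Measure Ω}
    (S : HaarSystem Ω μ) (j : ℕ) : MeasurableSpace Ω :=
  MeasurableSpace.generateFrom (↑(S.part j) : Set (Set Ω))

/-- A Haar filtration is dyadic if in each splitting the measure of each piece is a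
dyadic fraction of the measure of the split set. -/
def HaarSystem.IsDyadic {Ω : Type*} [m0 : MeasurableSpace Ω] {μ : Measure Ω}
    (S : HaarSystem Ω μ) : Prop :=
  (∀ A ∈ S.part 0, ∃ m k : ℕ, μ A = (m : ℝ≥0∞) / 2 ^ k * μ Set.univ) ∧
  ∀ j, ∃ m k : ℕ, μ (S.piece1 j) = (m : ℝ≥0∞) / 2 ^ k * μ (S.splitSet j)

/-- A Haar filtration is standard if each splitting is into two pieces of equal measure. -/
def HaarSystem.IsStandard {Ω : Type*} [m0 : MeasurableSpace Ω] {μ : Measure Ω}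
    (S : HaarSystem Ω μ) : Prop :=
  (∀ A ∈ S.part 0, μ A = μ Set.univ / 2) ∧
  ∀ j, μ (S.piece1 j) = μ (S.splitSet j) / 2

/-- A filtration of finite sub-σ-algebras, given by finite generating partitions
into sets of positive measure. -/
structure PartitionFiltration (Ω : Type*) [m0 : MeasurableSpace Ω] (μ : Measure Ω) where
  part : ℕ → Finset (Set Ω)
  meas : ∀ j, ∀ A ∈ part j, MeasurableSet A
  disj : ∀ j, ∀ A ∈ part j, ∀ B ∈ part j, A ≠ B → Disjoint A B
  cover : ∀ j, ⋃₀ (↑(part j) : Set (Set Ω)) = Set.univ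
  pos : ∀ j, ∀ A ∈ part j, 0 < μ A
  mono : ∀ j, MeasurableSpace.generateFrom (↑(part j) : Set (Set Ω)) ≤
    MeasurableSpace.generateFrom (↑(part (j + 1)) : Set (Set Ω))

/-- The natural σ-algebra `σ(X_1, …, X_j)` of a process. -/
def natSig {𝒳 Ω : Type*} [NormedAddCommGroup 𝒳] (X : ℕ → Ω → 𝒳) (j : ℕ) :
    MeasurableSpace Ω :=
  ⨆ i ∈ Set.Icc 1 j, MeasurableSpace.comap (X i) (borel 𝒳)

/-- `(X_j)_{j ≥ 1}` is a martingale (w.r.t. its natural filtration). -/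
def IsMart {𝒳 : Type*} [NormedAddCommGroup 𝒳] [NormedSpace ℝ 𝒳] [CompleteSpace 𝒳]
    {Ω : Type*} [m0 : MeasurableSpace Ω] (μ : Measure Ω) (X : ℕ → Ω → 𝒳) : Prop :=
  (∀ j, 1 ≤ j → Integrable (X j) μ) ∧ (∀ j, 1 ≤ j → natSig X j ≤ m0) ∧
  ∀ j k, 1 ≤ j → j ≤ k → (μ[X k| natSig X j]) =ᵐ[μ] X j

/-- `‖X‖_p = sup_{j ≥ 1} (𝔼 ‖X_j‖^p)^{1/p}`. -/
def martNorm {𝒳 : Type*} [NormedAddCommGroup 𝒳] {Ω : Type*} [m0 : MeasurableSpace Ω]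
    (μ : Measure Ω) (X : ℕ → Ω → 𝒳) (p : ℝ≥0∞) : ℝ≥0∞ :=
  ⨆ j, ⨆ (_ : 1 ≤ j), eLpNorm (X j) p μ

/-- The Rademacher maximal function `X_R^* = 𝓡({X_j : j ≥ 1})` of a process. -/
def martR {𝒳 : Type*} [NormedAddCommGroup 𝒳] [NormedSpace ℝ 𝒳] {Ω : Type*}
    (X : ℕ → Ω → 𝒳) (ω : Ω) : ℝ≥0∞ :=
  Rbound {y : 𝒳 | ∃ j, 1 ≤ j ∧ y = X j ω}

/-- Doob's maximal function `X^* = sup_{j ≥ 1} ‖X_j‖` of a process. -/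
def martStar {𝒳 : Type*} [NormedAddCommGroup 𝒳] {Ω : Type*}
    (X : ℕ → Ω → 𝒳) (ω : Ω) : ℝ≥0∞ :=
  ⨆ j, ⨆ (_ : 1 ≤ j), (‖X j ω‖₊ : ℝ≥0∞)

/-- `𝒳` has weak RMF with constant `C`: every `L¹`-bounded martingale `X` in `𝒳`
satisfies `ℙ(X_R^* > λ) ≤ (C/λ) ‖X‖₁`. -/
def WeakRMFConst (𝒳 : Type*) [NormedAddCommGroup 𝒳] [NormedSpace ℝ 𝒳]
    [CompleteSpace 𝒳] (C : ℝ) : Prop :=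
  ∀ (Ω : Type u) (m0 : MeasurableSpace Ω) (μ : Measure Ω), IsProbabilityMeasure μ →
    ∀ X : ℕ → Ω → 𝒳, IsMart μ X → martNorm μ X 1 < ⊤ →
      ∀ lam : ℝ, 0 < lam →
        μ {ω | ENNReal.ofReal lam < martR X ω} ≤
          ENNReal.ofReal (C / lam) * martNorm μ X 1

/-- A standard Haar martingale: a martingale whose natural filtration is a standard
Haar filtration. -/
def IsStdHaarMart {𝒳 : Type*} [NormedAddCommGroup 𝒳] [NormedSpace ℝ 𝒳] [CompleteSpace 𝒳]
    {Ω : Type*} [m0 : MeasurableSpace Ω] (μ : Measure Ω) (X : ℕ → Ω → 𝒳) : Prop :=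
  IsMart μ X ∧ ∃ S : HaarSystem Ω μ, S.IsStandard ∧
    ∀ j, 1 ≤ j → natSig X j = S.salg (j - 1)

/-- A finite martingale `(X_j)_{j=1}^N`. -/
def IsFinMart {𝒳 : Type*} [NormedAddCommGroup 𝒳] [NormedSpace ℝ 𝒳] [CompleteSpace 𝒳]
    {Ω : Type*} [m0 : MeasurableSpace Ω] (μ : Measure Ω) (X : ℕ → Ω → 𝒳) (N : ℕ) : Prop :=
  (∀ j, 1 ≤ j → j ≤ N → Integrable (X j) μ) ∧
  (∀ j, 1 ≤ j → j ≤ N → natSig X j ≤ m0) ∧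
  ∀ j k, 1 ≤ j → j ≤ k → k ≤ N → (μ[X k| natSig X j]) =ᵐ[μ] X j

/-- A simple martingale `(X_j)_{j=1}^N`: a finite martingale all of whose random
variables take finitely many values. -/
def IsSimpleMart {𝒳 : Type*} [NormedAddCommGroup 𝒳] [NormedSpace ℝ 𝒳] [CompleteSpace 𝒳]
    {Ω : Type*} [m0 : MeasurableSpace Ω] (μ : Measure Ω) (X : ℕ → Ω → 𝒳) (N : ℕ) : Prop :=
  IsFinMart μ X N ∧ ∀ j, 1 ≤ j → j ≤ N → (Set.range (X j)).Finite

/-- The (finite) set `{X_1(ω), …, X_k(ω)}`. -/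
def martSet {𝒳 Ω : Type*} [DecidableEq 𝒳] (X : ℕ → Ω → 𝒳) (k : ℕ) (ω : Ω) : Finset 𝒳 :=
  (Finset.Icc 1 k).image fun i => X i ω

/-! ### Auxiliary development for `statement4` -/

section RadAux

variable {𝒳 : Type*} [NormedAddCommGroup 𝒳] [NormedSpace ℝ 𝒳]

lemma radAvg_nonneg {N : ℕ} (x : Fin N → 𝒳) : 0 ≤ radAvg x := by
  have h1 : (0:ℝ) ≤ ∑ ε : Fin N → Bool, ‖∑ j, (if ε j then (1 : ℝ) else -1) • x j‖ ^ 2 :=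
    Finset.sum_nonneg fun ε _ => by positivity
  have h2 : (0:ℝ) ≤ ((2:ℝ) ^ N)⁻¹ := by positivity
  exact mul_nonneg h2 h1

lemma radAvg_smul_const {N : ℕ} (l : Fin N → ℝ) (c : 𝒳) :
    radAvg (fun j => l j • c) = ‖c‖ ^ 2 * radAvg l := by
  have hterm : ∀ ε : Fin N → Bool,
      ‖∑ j, (if ε j then (1:ℝ) else -1) • (l j • c)‖ ^ 2
        = ‖c‖ ^ 2 * ‖∑ j, (if ε j then (1:ℝ) else -1) • l j‖ ^ 2 := by
    intro ε
    have h1 : ∑ j, (if ε j then (1:ℝ) else -1) • (l j • c)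
        = (∑ j, (if ε j then (1:ℝ) else -1) • l j) • c := by
      rw [Finset.sum_smul]
      exact Finset.sum_congr rfl fun j _ => (smul_smul _ _ _)
    rw [h1, norm_smul, mul_pow]
    ring
  unfold radAvg
  simp_rw [hterm]
  rw [← Finset.mul_sum]
  ring

lemma isRBound_mono {S T : Set 𝒳} {r : ℝ} (hST : S ⊆ T) (h : IsRBound T r) : IsRBound S r :=
  ⟨h.1, fun N y l hy => h.2 N y l fun j => hST (hy j)⟩

lemma Rbound_mono {S T : Set 𝒳} (hST : S ⊆ T) : Rbound S ≤ Rbound T := by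
  apply sInf_le_sInf
  rintro c ⟨r, hr, rfl⟩
  exact ⟨r, isRBound_mono hST hr, rfl⟩

lemma Rbound_le_ofReal {S : Set 𝒳} {r : ℝ} (h : IsRBound S r) : Rbound S ≤ ENNReal.ofReal r :=
  sInf_le ⟨r, h, rfl⟩

lemma Rbound_iUnion_eq_iSup {S : ℕ → Set 𝒳} (hmono : Monotone S) :
    Rbound (⋃ k, S k) = ⨆ k, Rbound (S k) := by
  refine le_antisymm ?_ (iSup_le fun k => Rbound_mono (Set.subset_iUnion S k))
  set M := ⨆ k, Rbound (S k) with hM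
  rcases eq_or_ne M ⊤ with htop | htop
  · rw [htop]; exact le_top
  have hMr : ENNReal.ofReal M.toReal = M := ENNReal.ofReal_toReal htop
  have hMnn : 0 ≤ M.toReal := ENNReal.toReal_nonneg
  have key : ∀ ε : ℝ, 0 < ε → IsRBound (⋃ k, S k) (M.toReal + ε) := by
    intro ε hε
    refine ⟨by linarith, ?_⟩
    intro N y l hy
    choose k hk using fun j => Set.mem_iUnion.mp (hy j)
    set K := Finset.univ.sup k with hK
    have hyK : ∀ j, y j ∈ S K := fun j => hmono (Finset.le_sup (Finset.mem_univ j)) (hk j)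
    have hlt : Rbound (S K) < ENNReal.ofReal (M.toReal + ε) := by
      refine lt_of_le_of_lt (le_iSup (fun k => Rbound (S k)) K) ?_
      rw [← hM]
      conv_lhs => rw [← hMr]
      exact (ENNReal.ofReal_lt_ofReal_iff (by linarith)).mpr (by linarith)
    obtain ⟨c, hc, hclt⟩ := sInf_lt_iff.mp hlt
    obtain ⟨r, hr, rfl⟩ := hc
    have hrlt : r < M.toReal + ε := (ENNReal.ofReal_lt_ofReal_iff (by linarith)).mp hclt
    calc radAvg (fun j => l j • y j) ≤ r ^ 2 * radAvg l := hr.2 N y l hyK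
      _ ≤ (M.toReal + ε) ^ 2 * radAvg l := by
          apply mul_le_mul_of_nonneg_right _ (radAvg_nonneg l)
          exact pow_le_pow_left₀ hr.1 (le_of_lt hrlt) 2
  refine ENNReal.le_of_forall_pos_le_add fun ε hε _ => ?_
  calc Rbound (⋃ k, S k) ≤ ENNReal.ofReal (M.toReal + ε) :=
        Rbound_le_ofReal (key ε (by exact_mod_cast hε))
    _ ≤ ENNReal.ofReal M.toReal + ENNReal.ofReal ε := ENNReal.ofReal_add_le
    _ = M + ε := by rw [hMr, ENNReal.ofReal_coe_nnreal]

end RadAux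

section Factor

lemma measurableSet_of_countable_factor {α β : Type*} [MeasurableSpace α] [Countable β]
    {c : α → β} (hc : ∀ b, MeasurableSet {a | c a = b}) {P : α → Prop}
    (hP : ∀ a a', c a = c a' → (P a ↔ P a')) : MeasurableSet {a | P a} := by
  have h : {a | P a} = ⋃ b ∈ {b : β | ∃ a, c a = b ∧ P a}, {a | c a = b} := by
    ext a
    simp only [Set.mem_setOf_eq, Set.mem_iUnion, exists_prop]
    constructor
    · intro ha; exact ⟨c a, ⟨a, rfl, ha⟩, rfl⟩
    · rintro ⟨b, ⟨a', ha', hPa'⟩, hab⟩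
      exact (hP a a' (by rw [hab, ha'])).mpr hPa'
  rw [h]
  exact MeasurableSet.biUnion (Set.to_countable _) fun b _ => hc b

lemma measurable_of_countable_factor {α β γ : Type*} [MeasurableSpace α] [MeasurableSpace γ]
    [Countable β] {c : α → β} (hc : ∀ b, MeasurableSet {a | c a = b}) {F : α → γ}
    (hF : ∀ a a', c a = c a' → F a = F a') : Measurable F := by
  intro s _
  have h : F ⁻¹' s = ⋃ b ∈ {b : β | ∃ a, c a = b ∧ F a ∈ s}, {a | c a = b} := by
    ext a
    simp only [Set.mem_preimage, Set.mem_iUnion, Set.mem_setOf_eq, exists_prop]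
    constructor
    · intro ha
      exact ⟨c a, ⟨a, rfl, ha⟩, rfl⟩
    · rintro ⟨b, ⟨a', ha', hFa'⟩, hab⟩
      rwa [hF a a' (by rw [hab, ha'])]
  rw [h]
  exact MeasurableSet.biUnion (Set.to_countable _) fun b _ => hc b

lemma countable_range_of_countable_factor {α β γ : Type*} [Countable β] {c : α → β}
    {F : α → γ} (hF : ∀ a a', c a = c a' → F a = F a') : (Set.range F).Countable := by
  have h : Set.range F ⊆ Set.range (fun b : {b : β // ∃ a, c a = b} => F b.2.choose) := by
    rintro - ⟨a, rfl⟩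
    exact ⟨⟨c a, ⟨a, rfl⟩⟩, hF _ a (⟨a, rfl⟩ : ∃ a', c a' = c a).choose_spec⟩
  exact (Set.countable_range _).mono h

lemma stronglyMeasurable_of_countable_factor {α β E : Type*} [NormedAddCommGroup E]
    [MeasurableSpace α] [Countable β] {c : α → β} (hc : ∀ b, MeasurableSet {a | c a = b})
    {F : α → E} (hF : ∀ a a', c a = c a' → F a = F a') : StronglyMeasurable F := by
  borelize E
  rw [stronglyMeasurable_iff_measurable_separable]
  exact ⟨measurable_of_countable_factor hc hF,
    (countable_range_of_countable_factor hF).isSeparable⟩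

end Factor

section Floor

lemma floor_div_intCast {x : ℝ} {d : ℤ} (hd : 0 < d) : ⌊x / (d:ℝ)⌋ = ⌊x⌋ / d := by
  have h : ∀ z : ℤ, z ≤ ⌊x / (d:ℝ)⌋ ↔ z ≤ ⌊x⌋ / d := by
    intro z
    rw [Int.le_floor, le_div_iff₀ (by exact_mod_cast hd), Int.le_ediv_iff_mul_le hd, Int.le_floor]
    push_cast
    exact Iff.rfl
  exact le_antisymm ((h _).mp le_rfl) ((h _).mpr le_rfl)

lemma floor_zpow_eq_of_le {x y : ℝ} {j j' : ℤ} (hjj' : j ≤ j')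
    (h : ⌊(2:ℝ)^j' * x⌋ = ⌊(2:ℝ)^j' * y⌋) : ⌊(2:ℝ)^j * x⌋ = ⌊(2:ℝ)^j * y⌋ := by
  set d : ℤ := 2 ^ (j' - j).toNat with hd
  have hdpos : 0 < d := by positivity
  have hcast : (d : ℝ) = (2:ℝ) ^ (j' - j) := by
    rw [hd]
    push_cast
    rw [← zpow_natCast (2:ℝ), Int.toNat_of_nonneg (sub_nonneg.mpr hjj')]
  have key : ∀ z : ℝ, (2:ℝ)^j * z = ((2:ℝ)^j' * z) / (d:ℝ) := by
    intro z
    rw [hcast, eq_div_iff (by positivity)]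
    have h2 : (2:ℝ)^j * (2:ℝ)^(j'-j) = (2:ℝ)^j' := by
      rw [← zpow_add₀ (two_ne_zero : (2:ℝ) ≠ 0)]
      congr 1
      ring
    calc (2:ℝ)^j * z * (2:ℝ)^(j'-j) = (2:ℝ)^j * (2:ℝ)^(j'-j) * z := by ring
      _ = (2:ℝ)^j' * z := by rw [h2]
  rw [key x, key y, floor_div_intCast hdpos, floor_div_intCast hdpos, h]

end Floor

section Cube

variable {n : ℕ}

lemma mem_dyCube {j : ℤ} {ξ η : Fin n → ℝ} :
    η ∈ dyCube n j ξ ↔ ∀ i, ⌊(2:ℝ)^j * η i⌋ = ⌊(2:ℝ)^j * ξ i⌋ := Iff.rfl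

lemma mem_dyCube_self (j : ℤ) (ξ : Fin n → ℝ) : ξ ∈ dyCube n j ξ := fun _ => rfl

lemma dyCube_eq_of_mem {j : ℤ} {ξ η : Fin n → ℝ} (h : η ∈ dyCube n j ξ) :
    dyCube n j η = dyCube n j ξ := by
  ext η'
  rw [mem_dyCube, mem_dyCube]
  exact forall_congr' fun i => by rw [h i]

lemma dyCube_subset_of_le {j j' : ℤ} (h : j ≤ j') (ξ : Fin n → ℝ) :
    dyCube n j' ξ ⊆ dyCube n j ξ := by
  intro η hη
  rw [mem_dyCube] at hη ⊢
  exact fun i => floor_zpow_eq_of_le h (hη i)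

lemma dyCube_eq_pi (j : ℤ) (ξ : Fin n → ℝ) :
    dyCube n j ξ = Set.pi Set.univ (fun i => Set.Ico ((⌊(2:ℝ)^j * ξ i⌋ : ℝ) / 2^j)
      (((⌊(2:ℝ)^j * ξ i⌋ : ℝ) + 1) / 2^j)) := by
  ext η
  rw [mem_dyCube]
  simp only [Set.mem_pi, Set.mem_univ, forall_true_left, Set.mem_Ico]
  refine forall_congr' fun i => ?_
  rw [Int.floor_eq_iff, div_le_iff₀ (by positivity), lt_div_iff₀ (by positivity)]
  constructor <;> rintro ⟨h1, h2⟩ <;> constructor <;>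
    nlinarith [mul_comm ((2:ℝ)^j) (η i)]

lemma measurableSet_dyCube (j : ℤ) (ξ : Fin n → ℝ) : MeasurableSet (dyCube n j ξ) := by
  rw [dyCube_eq_pi]
  exact MeasurableSet.univ_pi fun i => measurableSet_Ico

lemma volume_dyCube (j : ℤ) (ξ : Fin n → ℝ) :
    volume (dyCube n j ξ) = (ENNReal.ofReal ((2:ℝ)^(-j : ℤ))) ^ n := by
  rw [dyCube_eq_pi, volume_pi_pi]
  have h : ∀ i : Fin n, volume (Set.Ico ((⌊(2:ℝ)^j * ξ i⌋ : ℝ) / 2^j)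
      (((⌊(2:ℝ)^j * ξ i⌋ : ℝ) + 1) / 2^j)) = ENNReal.ofReal ((2:ℝ)^(-j:ℤ)) := by
    intro i
    rw [Real.volume_Ico]
    congr 1
    rw [div_sub_div_same, add_sub_cancel_left, one_div, ← zpow_neg]
  simp only [h]
  rw [Finset.prod_const, Finset.card_univ, Fintype.card_fin]

lemma two_zpow_mul_pow (j : ℤ) (n : ℕ) : (2:ℝ)^(j * (n:ℤ)) * ((2:ℝ)^(-j:ℤ))^n = 1 := by
  have he : j * (n:ℤ) + (-j) * (n:ℤ) = 0 := by ring
  rw [← zpow_natCast ((2:ℝ)^(-j:ℤ)), ← zpow_mul, ← zpow_add₀ (two_ne_zero : (2:ℝ) ≠ 0), he,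
    zpow_zero]

variable {𝒳 : Type*} [NormedAddCommGroup 𝒳] [NormedSpace ℝ 𝒳]

lemma cubeAvg_congr_cube {f : (Fin n → ℝ) → 𝒳} {j : ℤ} {ξ η : Fin n → ℝ}
    (h : dyCube n j η = dyCube n j ξ) : cubeAvg f j η = cubeAvg f j ξ := by
  unfold cubeAvg
  rw [h]

lemma cubeAvg_of_const_on [CompleteSpace 𝒳] {f : (Fin n → ℝ) → 𝒳} {j : ℤ} {ξ : Fin n → ℝ}
    {c : 𝒳} (h : ∀ η ∈ dyCube n j ξ, f η = c) : cubeAvg f j ξ = c := by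
  unfold cubeAvg
  rw [setIntegral_congr_fun (measurableSet_dyCube j ξ) h, setIntegral_const, measureReal_def, volume_dyCube,
    ENNReal.toReal_pow, ENNReal.toReal_ofReal (by positivity), smul_smul, two_zpow_mul_pow,
    one_smul]

lemma norm_cubeAvg_le [CompleteSpace 𝒳] (f : (Fin n → ℝ) → 𝒳) (j : ℤ) (ξ : Fin n → ℝ) :
    ‖cubeAvg f j ξ‖ ≤ (2:ℝ)^(j * (n:ℤ)) * (∫⁻ η in dyCube n j ξ, (‖f η‖₊ : ℝ≥0∞)).toReal := by
  unfold cubeAvg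
  rw [norm_smul, Real.norm_eq_abs, abs_of_pos (by positivity)]
  apply mul_le_mul_of_nonneg_left _ (by positivity)
  calc ‖∫ η in dyCube n j ξ, f η‖
      ≤ (∫⁻ η in dyCube n j ξ, ENNReal.ofReal ‖f η‖).toReal := norm_integral_le_lintegral_norm _
    _ = (∫⁻ η in dyCube n j ξ, (‖f η‖₊ : ℝ≥0∞)).toReal := by
        simp_rw [ofReal_norm, enorm_eq_nnnorm]

/-- The vector of floors at generation `j`. -/
def floorsAt (j : ℤ) (ξ : Fin n → ℝ) : Fin n → ℤ := fun i => ⌊(2:ℝ)^j * ξ i⌋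

lemma floors_fiber_eq_dyCube {j : ℤ} {m : Fin n → ℤ} {ξ₀ : Fin n → ℝ}
    (h : floorsAt j ξ₀ = m) : {ξ : Fin n → ℝ | floorsAt j ξ = m} = dyCube n j ξ₀ := by
  subst h
  ext η
  simp only [Set.mem_setOf_eq, funext_iff, mem_dyCube, floorsAt]

lemma measurableSet_floors_fiber (j : ℤ) (m : Fin n → ℤ) :
    MeasurableSet {ξ : Fin n → ℝ | floorsAt j ξ = m} := by
  rcases Set.eq_empty_or_nonempty {ξ : Fin n → ℝ | floorsAt j ξ = m} with h | ⟨ξ₀, hξ₀⟩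
  · rw [h]; exact MeasurableSet.empty
  · rw [floors_fiber_eq_dyCube hξ₀]
    exact measurableSet_dyCube j ξ₀

lemma dyCube_eq_of_floorsAt_eq {j : ℤ} {ξ η : Fin n → ℝ} (h : floorsAt j ξ = floorsAt j η) :
    dyCube n j ξ = dyCube n j η := by
  have hmem : η ∈ dyCube n j ξ := by
    rw [mem_dyCube]
    intro i
    exact (congrFun h i).symm
  exact (dyCube_eq_of_mem hmem).symm

lemma mem_floors_fiber_self (j : ℤ) (ξ : Fin n → ℝ) :
    ξ ∈ {ζ : Fin n → ℝ | floorsAt j ζ = floorsAt j ξ} := rfl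

lemma disjoint_floors_fiber {j : ℤ} {m m' : Fin n → ℤ} (h : m ≠ m') :
    Disjoint {ξ : Fin n → ℝ | floorsAt j ξ = m} {ξ : Fin n → ℝ | floorsAt j ξ = m'} := by
  rw [Set.disjoint_left]
  rintro ξ h1 h2
  exact h (by rw [← h1, h2])

end Cube

section Main

variable {𝒳 : Type*} [NormedAddCommGroup 𝒳] [NormedSpace ℝ 𝒳] [CompleteSpace 𝒳] {n : ℕ}

/-- The measure with density `‖f‖`. -/
noncomputable def nuM (f : (Fin n → ℝ) → 𝒳) : Measure (Fin n → ℝ) :=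
  volume.withDensity fun η => (‖f η‖₊ : ℝ≥0∞)

/-- The dyadic cube of generation `j` containing `ξ` is "bad" (has large average). -/
def badAt (f : (Fin n → ℝ) → 𝒳) (lam : ℝ) (j : ℤ) (ξ : Fin n → ℝ) : Prop :=
  ENNReal.ofReal lam * volume (dyCube n j ξ) < nuM f (dyCube n j ξ)

/-- The bad set. -/
def Bset (f : (Fin n → ℝ) → 𝒳) (lam : ℝ) : Set (Fin n → ℝ) := {ξ | ∃ j : ℤ, badAt f lam j ξ}

/-- The bad set truncated at generation `k`. -/
def BsetK (f : (Fin n → ℝ) → 𝒳) (lam : ℝ) (k : ℕ) : Set (Fin n → ℝ) :=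
  {ξ | ∃ j : ℤ, j ≤ (k:ℤ) ∧ badAt f lam j ξ}

/-- The stopping time: the coarsest bad generation. -/
noncomputable def tauM (f : (Fin n → ℝ) → 𝒳) (lam : ℝ) (ξ : Fin n → ℝ) : ℤ :=
  if h : ∃ j : ℤ, badAt f lam j ξ ∧ ∀ j' : ℤ, badAt f lam j' ξ → j ≤ j' then h.choose else 0

/-- The stopped martingale / Calderón–Zygmund good function at scale `k`. -/
noncomputable def gM (f : (Fin n → ℝ) → 𝒳) (lam : ℝ) (k : ℕ) (ξ : Fin n → ℝ) : 𝒳 :=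
  if ξ ∈ BsetK f lam k then cubeAvg f (tauM f lam ξ) ξ else cubeAvg f (k:ℤ) ξ

lemma BsetK_subset (f : (Fin n → ℝ) → 𝒳) (lam : ℝ) (k : ℕ) : BsetK f lam k ⊆ Bset f lam :=
  fun ξ ⟨j, _, hj⟩ => ⟨j, hj⟩

lemma nuM_apply (f : (Fin n → ℝ) → 𝒳) {s : Set (Fin n → ℝ)} (hs : MeasurableSet s) :
    nuM f s = ∫⁻ η in s, (‖f η‖₊ : ℝ≥0∞) := withDensity_apply _ hs

lemma nuM_univ (f : (Fin n → ℝ) → 𝒳) : nuM f Set.univ = ∫⁻ η, (‖f η‖₊ : ℝ≥0∞) := by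
  rw [nuM_apply f MeasurableSet.univ, Measure.restrict_univ]

lemma nuM_univ_lt_top {f : (Fin n → ℝ) → 𝒳} (hf : Integrable f volume) :
    nuM f Set.univ < ⊤ := by
  rw [nuM_univ]
  exact hf.2

lemma badAt_congr {f : (Fin n → ℝ) → 𝒳} {lam : ℝ} {j : ℤ} {ξ η : Fin n → ℝ}
    (h : η ∈ dyCube n j ξ) : badAt f lam j η ↔ badAt f lam j ξ := by
  unfold badAt
  rw [dyCube_eq_of_mem h]

lemma exists_lower_bound_bad {f : (Fin n → ℝ) → 𝒳} {lam : ℝ} (hn : n ≠ 0)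
    (hf : Integrable f volume) (hlam : 0 < lam) :
    ∃ j₀ : ℤ, ∀ (ξ : Fin n → ℝ) (j : ℤ), j ≤ j₀ → ¬ badAt f lam j ξ := by
  have hfin : nuM f Set.univ / ENNReal.ofReal lam ≠ ⊤ :=
    (ENNReal.div_lt_top (nuM_univ_lt_top hf).ne (ENNReal.ofReal_pos.mpr hlam).ne').ne
  obtain ⟨N, hN⟩ := ENNReal.exists_nat_gt hfin
  refine ⟨-(N : ℤ), fun ξ j hj => ?_⟩
  unfold badAt
  rw [not_lt]
  have h1 : nuM f (dyCube n j ξ) ≤ nuM f Set.univ := measure_mono (Set.subset_univ _)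
  have h2 : (N : ℝ≥0∞) ≤ volume (dyCube n j ξ) := by
    rw [volume_dyCube]
    have hr : (N:ℝ) ≤ (2:ℝ)^(-j : ℤ) := by
      have h3 : (N:ℝ) ≤ (2:ℝ)^N := by
        exact_mod_cast (Nat.lt_two_pow_self (n := N)).le
      have h4 : (2:ℝ)^((N:ℤ)) ≤ (2:ℝ)^(-j) :=
        zpow_le_zpow_right₀ one_le_two (by omega)
      rw [zpow_natCast] at h4
      linarith
    have h5 : (N : ℝ≥0∞) ≤ ENNReal.ofReal ((2:ℝ)^(-j:ℤ)) := by
      rw [← ENNReal.ofReal_natCast]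
      exact ENNReal.ofReal_le_ofReal hr
    have hone : (1:ℝ≥0∞) ≤ ENNReal.ofReal ((2:ℝ)^(-j:ℤ)) := by
      rw [← ENNReal.ofReal_one]
      apply ENNReal.ofReal_le_ofReal
      calc (1:ℝ) = (2:ℝ)^(0:ℤ) := (zpow_zero _).symm
        _ ≤ (2:ℝ)^(-j:ℤ) := zpow_le_zpow_right₀ one_le_two (by omega)
    calc (N : ℝ≥0∞) ≤ ENNReal.ofReal ((2:ℝ)^(-j:ℤ)) := h5
      _ ≤ (ENNReal.ofReal ((2:ℝ)^(-j:ℤ)))^n := le_self_pow₀ hone hn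
  have h6 : nuM f Set.univ ≤ ENNReal.ofReal lam * N := by
    have h7 := (ENNReal.div_lt_iff (Or.inl (ENNReal.ofReal_pos.mpr hlam).ne')
      (Or.inl ENNReal.ofReal_ne_top)).mp hN
    rw [mul_comm] at h7
    exact h7.le
  calc nuM f (dyCube n j ξ) ≤ nuM f Set.univ := h1
    _ ≤ ENNReal.ofReal lam * N := h6
    _ ≤ ENNReal.ofReal lam * volume (dyCube n j ξ) := mul_le_mul_right h2 _

lemma tau_spec {f : (Fin n → ℝ) → 𝒳} {lam : ℝ} (hn : n ≠ 0) (hf : Integrable f volume)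
    (hlam : 0 < lam) {ξ : Fin n → ℝ} (hξ : ξ ∈ Bset f lam) :
    badAt f lam (tauM f lam ξ) ξ ∧ ∀ j : ℤ, badAt f lam j ξ → tauM f lam ξ ≤ j := by
  obtain ⟨j₀, hj₀⟩ := exists_lower_bound_bad hn hf hlam
  have hbdd : ∃ b : ℤ, ∀ z : ℤ, badAt f lam z ξ → b ≤ z := by
    refine ⟨j₀ + 1, fun z hz => ?_⟩
    by_contra hcon
    push_neg at hcon
    exact hj₀ ξ z (by omega) hz
  obtain ⟨lb, hlb1, hlb2⟩ := Int.exists_least_of_bdd hbdd hξ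
  have hex : ∃ j : ℤ, badAt f lam j ξ ∧ ∀ j' : ℤ, badAt f lam j' ξ → j ≤ j' := ⟨lb, hlb1, hlb2⟩
  rw [tauM, dif_pos hex]
  exact hex.choose_spec

lemma mem_Bset_of_cube {f : (Fin n → ℝ) → 𝒳} {lam : ℝ} (hn : n ≠ 0) (hf : Integrable f volume)
    (hlam : 0 < lam) {ξ η : Fin n → ℝ} (hξ : ξ ∈ Bset f lam)
    (hη : η ∈ dyCube n (tauM f lam ξ) ξ) :
    η ∈ Bset f lam ∧ tauM f lam η = tauM f lam ξ := by
  obtain ⟨hbad, hmin⟩ := tau_spec hn hf hlam hξ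
  have hbadη : badAt f lam (tauM f lam ξ) η := (badAt_congr hη).mpr hbad
  have hηB : η ∈ Bset f lam := ⟨_, hbadη⟩
  obtain ⟨hbadη', hminη⟩ := tau_spec hn hf hlam hηB
  refine ⟨hηB, le_antisymm (hminη _ hbadη) ?_⟩
  by_contra hcon
  push_neg at hcon
  have hξmem : ξ ∈ dyCube n (tauM f lam η) η := by
    have h1 : dyCube n (tauM f lam ξ) η = dyCube n (tauM f lam ξ) ξ := dyCube_eq_of_mem hη
    have h2 : dyCube n (tauM f lam ξ) η ⊆ dyCube n (tauM f lam η) η :=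
      dyCube_subset_of_le (le_of_lt hcon) η
    exact h2 (h1 ▸ mem_dyCube_self _ ξ)
  have hbadξ : badAt f lam (tauM f lam η) ξ := (badAt_congr hξmem).mpr hbadη'
  exact absurd (hmin _ hbadξ) (not_le.mpr hcon)

lemma mem_BsetK_iff {f : (Fin n → ℝ) → 𝒳} {lam : ℝ} (hn : n ≠ 0) (hf : Integrable f volume)
    (hlam : 0 < lam) {k : ℕ} {ξ : Fin n → ℝ} :
    ξ ∈ BsetK f lam k ↔ ξ ∈ Bset f lam ∧ tauM f lam ξ ≤ (k:ℤ) := by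
  constructor
  · intro hmem
    have hB : ξ ∈ Bset f lam := BsetK_subset f lam k hmem
    obtain ⟨j, hjk, hj⟩ := hmem
    exact ⟨hB, le_trans ((tau_spec hn hf hlam hB).2 j hj) hjk⟩
  · rintro ⟨hB, hk⟩
    exact ⟨tauM f lam ξ, hk, (tau_spec hn hf hlam hB).1⟩

end Main

section Main2

variable {𝒳 : Type*} [NormedAddCommGroup 𝒳] [NormedSpace ℝ 𝒳] [CompleteSpace 𝒳] {n : ℕ}

lemma badAt_factor {f : (Fin n → ℝ) → 𝒳} {lam : ℝ} {j : ℤ} {ξ η : Fin n → ℝ}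
    (h : floorsAt j ξ = floorsAt j η) : badAt f lam j ξ ↔ badAt f lam j η := by
  unfold badAt
  rw [dyCube_eq_of_floorsAt_eq h]

lemma measurableSet_badAt (f : (Fin n → ℝ) → 𝒳) (lam : ℝ) (j : ℤ) :
    MeasurableSet {ξ : Fin n → ℝ | badAt f lam j ξ} :=
  measurableSet_of_countable_factor (c := floorsAt j) (measurableSet_floors_fiber j)
    (fun _ _ h => badAt_factor h)

lemma measurableSet_Bset (f : (Fin n → ℝ) → 𝒳) (lam : ℝ) : MeasurableSet (Bset f lam) := by
  have h : Bset f lam = ⋃ j : ℤ, {ξ | badAt f lam j ξ} := by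
    ext ξ
    simp only [Bset, Set.mem_setOf_eq, Set.mem_iUnion]
  rw [h]
  exact MeasurableSet.iUnion fun j => measurableSet_badAt f lam j

lemma measurableSet_BsetK (f : (Fin n → ℝ) → 𝒳) (lam : ℝ) (k : ℕ) :
    MeasurableSet (BsetK f lam k) := by
  have h : BsetK f lam k = ⋃ j ∈ Set.Iic (k:ℤ), {ξ | badAt f lam j ξ} := by
    ext ξ
    simp only [BsetK, Set.mem_setOf_eq, Set.mem_iUnion, Set.mem_Iic, exists_prop]
  rw [h]
  exact MeasurableSet.biUnion (Set.to_countable _) fun j _ => measurableSet_badAt f lam j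

lemma measurableSet_tau_fiber {f : (Fin n → ℝ) → 𝒳} {lam : ℝ} (hn : n ≠ 0)
    (hf : Integrable f volume) (hlam : 0 < lam) (j : ℤ) :
    MeasurableSet {ξ : Fin n → ℝ | ξ ∈ Bset f lam ∧ tauM f lam ξ = j} := by
  have h : {ξ : Fin n → ℝ | ξ ∈ Bset f lam ∧ tauM f lam ξ = j}
      = {ξ | badAt f lam j ξ} ∩ ⋂ j' ∈ Set.Iio j, {ξ | badAt f lam j' ξ}ᶜ := by
    ext ξ
    simp only [Set.mem_setOf_eq, Set.mem_inter_iff, Set.mem_iInter, Set.mem_Iio,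
      Set.mem_compl_iff]
    constructor
    · rintro ⟨hB, rfl⟩
      obtain ⟨hbad, hmin⟩ := tau_spec hn hf hlam hB
      exact ⟨hbad, fun j' hj' hbad' => absurd (hmin j' hbad') (by omega)⟩
    · rintro ⟨hbad, hmin⟩
      have hB : ξ ∈ Bset f lam := ⟨j, hbad⟩
      obtain ⟨hbad2, hmin2⟩ := tau_spec hn hf hlam hB
      refine ⟨hB, le_antisymm (hmin2 j hbad) ?_⟩
      by_contra hcon
      push_neg at hcon
      exact hmin _ hcon hbad2
  rw [h]
  exact (measurableSet_badAt f lam j).inter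
    (MeasurableSet.biInter (Set.to_countable _) fun j' _ => (measurableSet_badAt f lam j').compl)

/-- The stopping level used to define `gM`. -/
noncomputable def sigM (f : (Fin n → ℝ) → 𝒳) (lam : ℝ) (k : ℕ) (ξ : Fin n → ℝ) : ℤ :=
  if ξ ∈ BsetK f lam k then tauM f lam ξ else (k:ℤ)

lemma gM_eq_sig (f : (Fin n → ℝ) → 𝒳) (lam : ℝ) (k : ℕ) (ξ : Fin n → ℝ) :
    gM f lam k ξ = cubeAvg f (sigM f lam k ξ) ξ := by
  unfold gM sigM
  split_ifs <;> rfl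

lemma measurableSet_sig_fiber {f : (Fin n → ℝ) → 𝒳} {lam : ℝ} (hn : n ≠ 0)
    (hf : Integrable f volume) (hlam : 0 < lam) (k : ℕ) (j : ℤ) :
    MeasurableSet {ξ : Fin n → ℝ | sigM f lam k ξ = j} := by
  have h : {ξ : Fin n → ℝ | sigM f lam k ξ = j}
      = (BsetK f lam k ∩ {ξ | ξ ∈ Bset f lam ∧ tauM f lam ξ = j})
        ∪ ((BsetK f lam k)ᶜ ∩ {ξ : Fin n → ℝ | (k:ℤ) = j}) := by
    ext ξ
    simp only [Set.mem_setOf_eq, Set.mem_union, Set.mem_inter_iff, Set.mem_compl_iff, sigM]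
    split_ifs with hmem
    · constructor
      · intro hj
        exact Or.inl ⟨hmem, BsetK_subset f lam k hmem, hj⟩
      · rintro (⟨_, _, hj⟩ | ⟨hc, _⟩)
        · exact hj
        · exact absurd hmem hc
    · constructor
      · intro hj
        exact Or.inr ⟨hmem, hj⟩
      · rintro (⟨hc, _⟩ | ⟨_, hj⟩)
        · exact absurd hc hmem
        · exact hj
  rw [h]
  exact ((measurableSet_BsetK f lam k).inter (measurableSet_tau_fiber hn hf hlam j)).union
    ((measurableSet_BsetK f lam k).compl.inter (MeasurableSet.const _))

lemma stronglyMeasurable_gM {f : (Fin n → ℝ) → 𝒳} {lam : ℝ} (hn : n ≠ 0)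
    (hf : Integrable f volume) (hlam : 0 < lam) (k : ℕ) :
    StronglyMeasurable (gM f lam k) := by
  apply stronglyMeasurable_of_countable_factor
    (c := fun ξ => ((sigM f lam k ξ, floorsAt (sigM f lam k ξ) ξ) : ℤ × (Fin n → ℤ)))
  · rintro ⟨j, m⟩
    have h : {a : Fin n → ℝ | (sigM f lam k a, floorsAt (sigM f lam k a) a) = (j, m)}
        = {a | sigM f lam k a = j} ∩ {a | floorsAt j a = m} := by
      ext a
      simp only [Set.mem_setOf_eq, Set.mem_inter_iff, Prod.mk.injEq]
      constructor
      · rintro ⟨h1, h2⟩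
        refine ⟨h1, ?_⟩
        rw [← h1]
        exact h2
      · rintro ⟨h1, h2⟩
        refine ⟨h1, ?_⟩
        rw [h1]
        exact h2
    rw [h]
    exact (measurableSet_sig_fiber hn hf hlam k j).inter (measurableSet_floors_fiber j m)
  · intro a a' hca
    rw [Prod.mk.injEq] at hca
    obtain ⟨h1, h2⟩ := hca
    rw [gM_eq_sig, gM_eq_sig, ← h1]
    rw [← h1] at h2
    exact (cubeAvg_congr_cube (dyCube_eq_of_floorsAt_eq h2).symm).symm

lemma norm_cubeAvg_le' {f : (Fin n → ℝ) → 𝒳} (j : ℤ) (ξ : Fin n → ℝ) :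
    ‖cubeAvg f j ξ‖ ≤ (2:ℝ)^(j * (n:ℤ)) * (nuM f (dyCube n j ξ)).toReal := by
  have h := norm_cubeAvg_le f j ξ
  rwa [← nuM_apply f (measurableSet_dyCube j ξ)] at h

lemma toReal_lam_vol {lam : ℝ} (hlam : 0 ≤ lam) (j : ℤ) (ξ : Fin n → ℝ) :
    (ENNReal.ofReal lam * volume (dyCube n j ξ)).toReal = lam * ((2:ℝ)^(-j:ℤ))^n := by
  rw [volume_dyCube, ENNReal.toReal_mul, ENNReal.toReal_ofReal hlam, ENNReal.toReal_pow,
    ENNReal.toReal_ofReal (by positivity)]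

lemma norm_cubeAvg_le_of_notbad {f : (Fin n → ℝ) → 𝒳} {lam : ℝ} (hlam : 0 < lam)
    {j j' : ℤ} (hjj' : j' ≤ j) {ξ : Fin n → ℝ} (hnb : ¬ badAt f lam j' ξ) :
    ‖cubeAvg f j ξ‖ ≤ (2:ℝ)^((j - j') * (n:ℤ)) * lam := by
  have h1 : nuM f (dyCube n j ξ) ≤ ENNReal.ofReal lam * volume (dyCube n j' ξ) := by
    calc nuM f (dyCube n j ξ) ≤ nuM f (dyCube n j' ξ) :=
          measure_mono (dyCube_subset_of_le hjj' ξ)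
      _ ≤ _ := not_lt.mp hnb
  have h2 : (nuM f (dyCube n j ξ)).toReal ≤ lam * ((2:ℝ)^(-j':ℤ))^n := by
    rw [← toReal_lam_vol hlam.le j' ξ]
    refine ENNReal.toReal_mono ?_ h1
    exact ENNReal.mul_ne_top ENNReal.ofReal_ne_top
      (by rw [volume_dyCube]; exact ENNReal.pow_ne_top ENNReal.ofReal_ne_top)
  calc ‖cubeAvg f j ξ‖ ≤ (2:ℝ)^(j * (n:ℤ)) * (nuM f (dyCube n j ξ)).toReal :=
        norm_cubeAvg_le' j ξ
    _ ≤ (2:ℝ)^(j * (n:ℤ)) * (lam * ((2:ℝ)^(-j':ℤ))^n) :=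
        mul_le_mul_of_nonneg_left h2 (by positivity)
    _ = (2:ℝ)^((j - j') * (n:ℤ)) * lam := by
        rw [← zpow_natCast ((2:ℝ)^(-j':ℤ)), ← zpow_mul]
        rw [mul_comm lam, ← mul_assoc, ← zpow_add₀ (two_ne_zero : (2:ℝ) ≠ 0)]
        congr 2
        ring

lemma norm_gM_le {f : (Fin n → ℝ) → 𝒳} {lam : ℝ} (hn : n ≠ 0) (hf : Integrable f volume)
    (hlam : 0 < lam) (k : ℕ) (ξ : Fin n → ℝ) : ‖gM f lam k ξ‖ ≤ 2^n * lam := by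
  unfold gM
  split_ifs with hmem
  · have hB : ξ ∈ Bset f lam := BsetK_subset f lam k hmem
    obtain ⟨hbad, hmin⟩ := tau_spec hn hf hlam hB
    have hnb : ¬ badAt f lam (tauM f lam ξ - 1) ξ := by
      intro hb
      have := hmin _ hb
      omega
    have h := norm_cubeAvg_le_of_notbad (j := tauM f lam ξ) hlam (by omega) hnb
    rw [show (tauM f lam ξ - (tauM f lam ξ - 1)) * (n:ℤ) = ((n:ℕ):ℤ) by ring,
      zpow_natCast] at h
    exact h
  · have hnb : ¬ badAt f lam (k:ℤ) ξ := fun hb => hmem ⟨k, le_refl _, hb⟩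
    have h := norm_cubeAvg_le_of_notbad hlam (le_refl (k:ℤ)) hnb
    rw [show ((k:ℤ) - (k:ℤ)) * (n:ℤ) = 0 by ring, zpow_zero, one_mul] at h
    have h2 : (1:ℝ) ≤ 2^n := one_le_pow₀ one_le_two
    nlinarith

lemma lam_mul_volume_Bset_le {f : (Fin n → ℝ) → 𝒳} {lam : ℝ} (hn : n ≠ 0)
    (hf : Integrable f volume) (hlam : 0 < lam) :
    ENNReal.ofReal lam * volume (Bset f lam) ≤ nuM f Set.univ := by
  classical
  set J : Set (ℤ × (Fin n → ℤ)) :=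
    {q | ∃ ξ₀, ξ₀ ∈ Bset f lam ∧ tauM f lam ξ₀ = q.1 ∧ floorsAt q.1 ξ₀ = q.2} with hJ
  set t : ℤ × (Fin n → ℤ) → Set (Fin n → ℝ) := fun q => {ζ | floorsAt q.1 ζ = q.2} with ht
  have hmeas : ∀ q ∈ J, MeasurableSet (t q) := fun q _ => measurableSet_floors_fiber q.1 q.2
  have hcube : ∀ q ∈ J, ∃ ξ₀, ξ₀ ∈ Bset f lam ∧ tauM f lam ξ₀ = q.1 ∧ t q = dyCube n q.1 ξ₀ := by
    rintro q ⟨ξ₀, hB, hτ, hfl⟩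
    exact ⟨ξ₀, hB, hτ, floors_fiber_eq_dyCube hfl⟩
  have hsub : ∀ q ∈ J, ∀ ζ ∈ t q, ζ ∈ Bset f lam ∧ tauM f lam ζ = q.1 := by
    intro q hq ζ hζ
    obtain ⟨ξ₀, hB, hτ, hteq⟩ := hcube q hq
    rw [hteq] at hζ
    rw [← hτ] at hζ
    obtain ⟨h1, h2⟩ := mem_Bset_of_cube hn hf hlam hB hζ
    exact ⟨h1, by omega⟩
  have hunion : Bset f lam = ⋃ q ∈ J, t q := by
    ext ζ
    simp only [Set.mem_iUnion, exists_prop]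
    constructor
    · intro hζ
      exact ⟨(tauM f lam ζ, floorsAt (tauM f lam ζ) ζ), ⟨ζ, hζ, rfl, rfl⟩, rfl⟩
    · rintro ⟨q, hq, hζ⟩
      exact (hsub q hq ζ hζ).1
  have hdisj : J.PairwiseDisjoint t := by
    rintro q hq q' hq' hne
    rw [Function.onFun, Set.disjoint_left]
    intro ζ hζ hζ'
    have h1 := (hsub q hq ζ hζ).2
    have h2 := (hsub q' hq' ζ hζ').2
    have hq1 : q.1 = q'.1 := by omega
    have hq2 : q.2 = q'.2 := by
      have hζ2 : floorsAt q.1 ζ = q.2 := hζ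
      have hζ2' : floorsAt q'.1 ζ = q'.2 := hζ'
      rw [← hζ2, ← hζ2', hq1]
    exact hne (Prod.ext hq1 hq2)
  have hcount : J.Countable := Set.to_countable J
  have hμ : volume (Bset f lam) = ∑' q : J, volume (t q) := by
    rw [hunion]
    exact measure_biUnion hcount hdisj hmeas
  have hν : ∑' q : J, nuM f (t q) ≤ nuM f Set.univ := by
    rw [← measure_biUnion hcount hdisj hmeas]
    exact measure_mono (Set.subset_univ _)
  calc ENNReal.ofReal lam * volume (Bset f lam)
      = ∑' q : J, ENNReal.ofReal lam * volume (t q) := by rw [hμ, ENNReal.tsum_mul_left]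
    _ ≤ ∑' q : J, nuM f (t q) := by
        apply ENNReal.tsum_le_tsum
        rintro ⟨q, hq⟩
        obtain ⟨ξ₀, hB, hτ, hteq⟩ := hcube q hq
        have hbad : badAt f lam (tauM f lam ξ₀) ξ₀ := (tau_spec hn hf hlam hB).1
        rw [hτ] at hbad
        unfold badAt at hbad
        rw [hteq]
        exact hbad.le
    _ ≤ nuM f Set.univ := hν

lemma nnnorm_cubeAvg_mul_vol_le {f : (Fin n → ℝ) → 𝒳} (hf : Integrable f volume)
    (j : ℤ) (ξ : Fin n → ℝ) :
    (‖cubeAvg f j ξ‖₊ : ℝ≥0∞) * volume (dyCube n j ξ) ≤ nuM f (dyCube n j ξ) := by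
  have hfin : nuM f (dyCube n j ξ) ≠ ⊤ :=
    (lt_of_le_of_lt (measure_mono (Set.subset_univ _)) (nuM_univ_lt_top hf)).ne
  have h1 : (‖cubeAvg f j ξ‖₊ : ℝ≥0∞)
      ≤ ENNReal.ofReal ((2:ℝ)^(j*(n:ℤ))) * nuM f (dyCube n j ξ) := by
    rw [← enorm_eq_nnnorm, ← ofReal_norm]
    calc ENNReal.ofReal ‖cubeAvg f j ξ‖
        ≤ ENNReal.ofReal ((2:ℝ)^(j*(n:ℤ)) * (nuM f (dyCube n j ξ)).toReal) :=
          ENNReal.ofReal_le_ofReal (norm_cubeAvg_le' j ξ)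
      _ = ENNReal.ofReal ((2:ℝ)^(j*(n:ℤ))) * ENNReal.ofReal ((nuM f (dyCube n j ξ)).toReal) :=
          ENNReal.ofReal_mul (by positivity)
      _ = _ := by rw [ENNReal.ofReal_toReal hfin]
  calc (‖cubeAvg f j ξ‖₊ : ℝ≥0∞) * volume (dyCube n j ξ)
      ≤ ENNReal.ofReal ((2:ℝ)^(j*(n:ℤ))) * nuM f (dyCube n j ξ) * volume (dyCube n j ξ) :=
        mul_le_mul_left h1 _
    _ = (ENNReal.ofReal ((2:ℝ)^(j*(n:ℤ))) * volume (dyCube n j ξ)) * nuM f (dyCube n j ξ) := by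
        ring
    _ = 1 * nuM f (dyCube n j ξ) := by
        rw [volume_dyCube, ← ENNReal.ofReal_pow (by positivity),
          ← ENNReal.ofReal_mul (by positivity), two_zpow_mul_pow, ENNReal.ofReal_one]
    _ = nuM f (dyCube n j ξ) := one_mul _

lemma lintegral_nnnorm_gM_le {f : (Fin n → ℝ) → 𝒳} {lam : ℝ} (hn : n ≠ 0)
    (hf : Integrable f volume) (hlam : 0 < lam) (k : ℕ) :
    ∫⁻ ξ, (‖gM f lam k ξ‖₊ : ℝ≥0∞) ≤ ((2:ℝ≥0∞)^n + 1) * nuM f Set.univ := by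
  have hofr : ENNReal.ofReal ((2:ℝ)^n) = (2:ℝ≥0∞)^n := by
    rw [ENNReal.ofReal_pow (by norm_num)]
    norm_num
  rw [← lintegral_add_compl (fun ξ => (‖gM f lam k ξ‖₊ : ℝ≥0∞)) (measurableSet_BsetK f lam k)]
  have hpart1 : ∫⁻ ξ in BsetK f lam k, (‖gM f lam k ξ‖₊ : ℝ≥0∞)
      ≤ (2:ℝ≥0∞)^n * nuM f Set.univ := by
    calc ∫⁻ ξ in BsetK f lam k, (‖gM f lam k ξ‖₊ : ℝ≥0∞)
        ≤ ∫⁻ _ in BsetK f lam k, ENNReal.ofReal (2^n * lam) := by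
          apply lintegral_mono
          intro ξ
          show (‖gM f lam k ξ‖₊ : ℝ≥0∞) ≤ ENNReal.ofReal (2^n * lam)
          rw [← enorm_eq_nnnorm, ← ofReal_norm]
          exact ENNReal.ofReal_le_ofReal (norm_gM_le hn hf hlam k ξ)
      _ = ENNReal.ofReal (2^n * lam) * volume (BsetK f lam k) := setLIntegral_const _ _
      _ ≤ ENNReal.ofReal (2^n * lam) * volume (Bset f lam) :=
          mul_le_mul_right (measure_mono (BsetK_subset f lam k)) _
      _ = (2:ℝ≥0∞)^n * (ENNReal.ofReal lam * volume (Bset f lam)) := by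
          rw [ENNReal.ofReal_mul (by positivity), hofr, mul_assoc]
      _ ≤ (2:ℝ≥0∞)^n * nuM f Set.univ :=
          mul_le_mul_right (lam_mul_volume_Bset_le hn hf hlam) _
  have hpart2 : ∫⁻ ξ in (BsetK f lam k)ᶜ, (‖gM f lam k ξ‖₊ : ℝ≥0∞) ≤ nuM f Set.univ := by
    have hcover : (BsetK f lam k)ᶜ = ⋃ m : Fin n → ℤ,
        ({ξ : Fin n → ℝ | floorsAt (k:ℤ) ξ = m} ∩ (BsetK f lam k)ᶜ) := by
      ext ξ
      simp only [Set.mem_iUnion, Set.mem_inter_iff, Set.mem_setOf_eq, Set.mem_compl_iff]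
      constructor
      · intro hξ
        exact ⟨floorsAt (k:ℤ) ξ, rfl, hξ⟩
      · rintro ⟨m, _, hξ⟩
        exact hξ
    rw [hcover, lintegral_iUnion
      (fun m => (measurableSet_floors_fiber _ m).inter (measurableSet_BsetK f lam k).compl)
      (fun m m' hne => (disjoint_floors_fiber hne).mono Set.inter_subset_left
        Set.inter_subset_left)]
    have hterm : ∀ m : Fin n → ℤ,
        (∫⁻ ξ in {ξ : Fin n → ℝ | floorsAt (k:ℤ) ξ = m} ∩ (BsetK f lam k)ᶜ,
          (‖gM f lam k ξ‖₊ : ℝ≥0∞)) ≤ nuM f {ξ : Fin n → ℝ | floorsAt (k:ℤ) ξ = m} := by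
      intro m
      rcases Set.eq_empty_or_nonempty {ξ : Fin n → ℝ | floorsAt (k:ℤ) ξ = m} with
        hemp | ⟨ξ₀, hξ₀⟩
      · have hemp2 : {ξ : Fin n → ℝ | floorsAt (k:ℤ) ξ = m} ∩ (BsetK f lam k)ᶜ = ∅ := by
          rw [hemp]
          exact Set.empty_inter _
        rw [hemp2]
        simp
      · have hfib := floors_fiber_eq_dyCube hξ₀
        have hsmeas : MeasurableSet
            ({ξ : Fin n → ℝ | floorsAt (k:ℤ) ξ = m} ∩ (BsetK f lam k)ᶜ) :=
          (measurableSet_floors_fiber _ m).inter (measurableSet_BsetK f lam k).compl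
        have hval : ∀ ξ ∈ {ξ : Fin n → ℝ | floorsAt (k:ℤ) ξ = m} ∩ (BsetK f lam k)ᶜ,
            (‖gM f lam k ξ‖₊ : ℝ≥0∞) = (‖cubeAvg f (k:ℤ) ξ₀‖₊ : ℝ≥0∞) := by
          rintro ξ ⟨hξm, hξc⟩
          have hgval : gM f lam k ξ = cubeAvg f (k:ℤ) ξ₀ := by
            unfold gM
            rw [if_neg hξc]
            exact cubeAvg_congr_cube
              (dyCube_eq_of_floorsAt_eq (by rw [Set.mem_setOf_eq.mp hξm, hξ₀]))
          rw [hgval]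
        calc (∫⁻ ξ in {ξ : Fin n → ℝ | floorsAt (k:ℤ) ξ = m} ∩ (BsetK f lam k)ᶜ,
              (‖gM f lam k ξ‖₊ : ℝ≥0∞))
            = (∫⁻ _ in {ξ : Fin n → ℝ | floorsAt (k:ℤ) ξ = m} ∩ (BsetK f lam k)ᶜ,
              (‖cubeAvg f (k:ℤ) ξ₀‖₊ : ℝ≥0∞)) := by
              apply setLIntegral_congr_fun hsmeas
              exact hval
          _ = (‖cubeAvg f (k:ℤ) ξ₀‖₊ : ℝ≥0∞)
              * volume ({ξ : Fin n → ℝ | floorsAt (k:ℤ) ξ = m} ∩ (BsetK f lam k)ᶜ) :=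
              setLIntegral_const _ _
          _ ≤ (‖cubeAvg f (k:ℤ) ξ₀‖₊ : ℝ≥0∞) * volume (dyCube n (k:ℤ) ξ₀) := by
              apply mul_le_mul_right
              apply measure_mono
              rw [← hfib]
              exact Set.inter_subset_left
          _ ≤ nuM f (dyCube n (k:ℤ) ξ₀) := nnnorm_cubeAvg_mul_vol_le hf (k:ℤ) ξ₀
          _ = nuM f {ξ : Fin n → ℝ | floorsAt (k:ℤ) ξ = m} := by rw [hfib]
    calc ∑' m : Fin n → ℤ, (∫⁻ ξ in {ξ : Fin n → ℝ | floorsAt (k:ℤ) ξ = m} ∩ (BsetK f lam k)ᶜ,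
          (‖gM f lam k ξ‖₊ : ℝ≥0∞))
        ≤ ∑' m : Fin n → ℤ, nuM f {ξ : Fin n → ℝ | floorsAt (k:ℤ) ξ = m} :=
          ENNReal.tsum_le_tsum hterm
      _ = nuM f (⋃ m : Fin n → ℤ, {ξ : Fin n → ℝ | floorsAt (k:ℤ) ξ = m}) :=
          (measure_iUnion (fun m m' hne => disjoint_floors_fiber hne)
            (fun m => measurableSet_floors_fiber _ m)).symm
      _ ≤ nuM f Set.univ := measure_mono (Set.subset_univ _)
  calc (∫⁻ ξ in BsetK f lam k, (‖gM f lam k ξ‖₊ : ℝ≥0∞))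
        + ∫⁻ ξ in (BsetK f lam k)ᶜ, (‖gM f lam k ξ‖₊ : ℝ≥0∞)
      ≤ (2:ℝ≥0∞)^n * nuM f Set.univ + nuM f Set.univ := add_le_add hpart1 hpart2
    _ = ((2:ℝ≥0∞)^n + 1) * nuM f Set.univ := by rw [add_mul, one_mul]

lemma integrable_gM {f : (Fin n → ℝ) → 𝒳} {lam : ℝ} (hn : n ≠ 0) (hf : Integrable f volume)
    (hlam : 0 < lam) (k : ℕ) : Integrable (gM f lam k) volume := by
  refine ⟨(stronglyMeasurable_gM hn hf hlam k).aestronglyMeasurable, ?_⟩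
  have h := lintegral_nnnorm_gM_le hn hf hlam k
  have hne : ((2:ℝ≥0∞)^n + 1) ≠ ⊤ :=
    ENNReal.add_ne_top.mpr ⟨ENNReal.pow_ne_top (by norm_num), ENNReal.one_ne_top⟩
  have h2 : ((2:ℝ≥0∞)^n + 1) * nuM f Set.univ < ⊤ :=
    ENNReal.mul_lt_top hne.lt_top (nuM_univ_lt_top hf)
  exact lt_of_le_of_lt h h2

end Main2

section Main3

variable {𝒳 : Type*} [NormedAddCommGroup 𝒳] [NormedSpace ℝ 𝒳] [CompleteSpace 𝒳] {n : ℕ}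

lemma setIntegral_piece {G f : (Fin n → ℝ) → 𝒳} {j' : ℤ} {m' : Fin n → ℤ}
    (hG : ∀ ζ ∈ {ζ : Fin n → ℝ | floorsAt j' ζ = m'},
      G ζ = (2:ℝ)^(j' * (n:ℤ)) • ∫ η in {ζ : Fin n → ℝ | floorsAt j' ζ = m'}, f η) :
    ∫ ζ in {ζ : Fin n → ℝ | floorsAt j' ζ = m'}, G ζ
      = ∫ ζ in {ζ : Fin n → ℝ | floorsAt j' ζ = m'}, f ζ := by
  rcases Set.eq_empty_or_nonempty {ζ : Fin n → ℝ | floorsAt j' ζ = m'} with hemp | ⟨ξ₀, hξ₀⟩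
  · rw [hemp]
    simp
  · have hfib := floors_fiber_eq_dyCube hξ₀
    rw [setIntegral_congr_fun (measurableSet_floors_fiber j' m') hG, setIntegral_const]
    rw [hfib, measureReal_def, volume_dyCube, ENNReal.toReal_pow, ENNReal.toReal_ofReal (by positivity),
      smul_smul, mul_comm, two_zpow_mul_pow, one_smul]

lemma mem_piece_value {f : (Fin n → ℝ) → 𝒳} {j' : ℤ} {m' : Fin n → ℤ} {ζ : Fin n → ℝ}
    (hζ : ζ ∈ {ζ : Fin n → ℝ | floorsAt j' ζ = m'}) :
    cubeAvg f j' ζ = (2:ℝ)^(j' * (n:ℤ)) • ∫ η in {ζ : Fin n → ℝ | floorsAt j' ζ = m'}, f η := by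
  have hfib := floors_fiber_eq_dyCube hζ
  unfold cubeAvg
  rw [hfib]

lemma cubeAvg_gM_eq {f : (Fin n → ℝ) → 𝒳} {lam : ℝ} (hn : n ≠ 0) (hf : Integrable f volume)
    (hlam : 0 < lam) (k : ℕ) {ξ : Fin n → ℝ} (hξ : ξ ∉ BsetK f lam k) {j : ℤ}
    (hj : j ≤ (k:ℤ)) : cubeAvg (gM f lam k) j ξ = cubeAvg f j ξ := by
  classical
  have hgint : Integrable (gM f lam k) volume := integrable_gM hn hf hlam k
  set t : ℤ × (Fin n → ℤ) → Set (Fin n → ℝ) := fun q => {ζ | floorsAt q.1 ζ = q.2} with ht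
  set P : Set (ℤ × (Fin n → ℤ)) :=
    {q | (∃ ξ₀, ξ₀ ∈ Bset f lam ∧ tauM f lam ξ₀ = q.1 ∧ floorsAt q.1 ξ₀ = q.2)
        ∧ q.1 ≤ (k:ℤ) ∧ t q ⊆ dyCube n j ξ}
      ∪ {q | q.1 = (k:ℤ) ∧ t q ⊆ dyCube n j ξ ∧ t q ∩ BsetK f lam k = ∅} with hP
  have hmeas : ∀ q : ℤ × (Fin n → ℤ), MeasurableSet (t q) :=
    fun q => measurableSet_floors_fiber q.1 q.2
  -- every point of a "selected" piece is in `BsetK` with stopping time `q.1`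
  have hsel : ∀ q ∈ P, (∃ ξ₀, ξ₀ ∈ Bset f lam ∧ tauM f lam ξ₀ = q.1 ∧ floorsAt q.1 ξ₀ = q.2)
      → q.1 ≤ (k:ℤ) → ∀ ζ ∈ t q, ζ ∈ BsetK f lam k ∧ tauM f lam ζ = q.1 := by
    rintro q _ ⟨ξ₀, hB, hτ, hfl⟩ hqk ζ hζ
    have hfib : t q = dyCube n q.1 ξ₀ := floors_fiber_eq_dyCube hfl
    rw [hfib, ← hτ] at hζ
    obtain ⟨h1, h2⟩ := mem_Bset_of_cube hn hf hlam hB hζ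
    refine ⟨(mem_BsetK_iff hn hf hlam).mpr ⟨h1, by omega⟩, by omega⟩
  -- cover
  have hcover : dyCube n j ξ = ⋃ q ∈ P, t q := by
    apply Set.Subset.antisymm
    · intro ζ hζ
      simp only [Set.mem_iUnion, exists_prop]
      by_cases hζK : ζ ∈ BsetK f lam k
      · obtain ⟨hζB, hζτ⟩ := (mem_BsetK_iff hn hf hlam).mp hζK
        refine ⟨(tauM f lam ζ, floorsAt (tauM f lam ζ) ζ), Or.inl ⟨⟨ζ, hζB, rfl, rfl⟩, hζτ, ?_⟩,
          rfl⟩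
        -- t q = dyCube n (tau ζ) ζ ⊆ dyCube n j ξ
        have hfib : t (tauM f lam ζ, floorsAt (tauM f lam ζ) ζ) = dyCube n (tauM f lam ζ) ζ :=
          floors_fiber_eq_dyCube rfl
        rw [hfib]
        rcases le_or_gt j (tauM f lam ζ) with hle | hlt
        · calc dyCube n (tauM f lam ζ) ζ ⊆ dyCube n j ζ := dyCube_subset_of_le hle ζ
            _ = dyCube n j ξ := dyCube_eq_of_mem hζ
        · exfalso
          have hξmem : ξ ∈ dyCube n (tauM f lam ζ) ζ := by
            have h1 : dyCube n j ξ = dyCube n j ζ := (dyCube_eq_of_mem hζ).symm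
            have h2 : dyCube n j ζ ⊆ dyCube n (tauM f lam ζ) ζ :=
              dyCube_subset_of_le hlt.le ζ
            exact h2 (h1 ▸ mem_dyCube_self j ξ)
          obtain ⟨hξB, hξτ⟩ := mem_Bset_of_cube hn hf hlam hζB hξmem
          exact hξ ((mem_BsetK_iff hn hf hlam).mpr ⟨hξB, by omega⟩)
      · refine ⟨((k:ℤ), floorsAt (k:ℤ) ζ), Or.inr ⟨rfl, ?_, ?_⟩, rfl⟩
        · have hfib : t ((k:ℤ), floorsAt (k:ℤ) ζ) = dyCube n (k:ℤ) ζ :=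
            floors_fiber_eq_dyCube rfl
          rw [hfib]
          calc dyCube n (k:ℤ) ζ ⊆ dyCube n j ζ := dyCube_subset_of_le hj ζ
            _ = dyCube n j ξ := dyCube_eq_of_mem hζ
        · have hfib : t ((k:ℤ), floorsAt (k:ℤ) ζ) = dyCube n (k:ℤ) ζ :=
            floors_fiber_eq_dyCube rfl
          rw [hfib]
          ext η
          simp only [Set.mem_inter_iff, Set.mem_empty_iff_false, iff_false, not_and]
          intro hη hηK
          obtain ⟨hηB, hητ⟩ := (mem_BsetK_iff hn hf hlam).mp hηK
          have hζmem : ζ ∈ dyCube n (tauM f lam η) η := by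
            have h1 : dyCube n (k:ℤ) η = dyCube n (k:ℤ) ζ := dyCube_eq_of_mem hη
            have h2 : dyCube n (k:ℤ) η ⊆ dyCube n (tauM f lam η) η :=
              dyCube_subset_of_le hητ η
            exact h2 (h1 ▸ mem_dyCube_self (k:ℤ) ζ)
          obtain ⟨hζB, hζτ⟩ := mem_Bset_of_cube hn hf hlam hηB hζmem
          exact hζK ((mem_BsetK_iff hn hf hlam).mpr ⟨hζB, by omega⟩)
    · intro ζ hζ
      simp only [Set.mem_iUnion, exists_prop] at hζ
      obtain ⟨q, hq, hζq⟩ := hζ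
      rcases hq with ⟨_, _, hsub⟩ | ⟨_, hsub, _⟩ <;> exact hsub hζq
  -- pairwise disjoint
  have hdisj : P.PairwiseDisjoint t := by
    rintro q hq q' hq' hne
    rw [Function.onFun, Set.disjoint_left]
    intro ζ hζ hζ'
    have hmemK : ∀ r ∈ P, ζ ∈ t r → (r.1 = (k:ℤ) ∧ ζ ∉ BsetK f lam k)
        ∨ (ζ ∈ BsetK f lam k ∧ tauM f lam ζ = r.1) := by
      rintro r hr hζr
      rcases hr with ⟨hwit, hrk, _⟩ | ⟨hrk, _, hempty⟩
      · exact Or.inr (hsel r (Or.inl ⟨hwit, hrk, by assumption⟩) hwit hrk ζ hζr)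
      · refine Or.inl ⟨hrk, fun hζK => ?_⟩
        have : ζ ∈ t r ∩ BsetK f lam k := ⟨hζr, hζK⟩
        rw [hempty] at this
        exact this
    have h1 := hmemK q hq hζ
    have h2 := hmemK q' hq' hζ'
    have hq1 : q.1 = q'.1 := by
      rcases h1 with ⟨e1, hn1⟩ | ⟨hm1, e1⟩ <;> rcases h2 with ⟨e2, hn2⟩ | ⟨hm2, e2⟩
      · omega
      · exact absurd hm2 hn1
      · exact absurd hm1 hn2
      · omega
    have hq2 : q.2 = q'.2 := by
      have hζ2 : floorsAt q.1 ζ = q.2 := hζ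
      have hζ2' : floorsAt q'.1 ζ = q'.2 := hζ'
      rw [← hζ2, ← hζ2', hq1]
    exact hne (Prod.ext hq1 hq2)
  -- per-piece integrals agree
  have hpiece : ∀ q ∈ P, (∫ ζ in t q, gM f lam k ζ) = ∫ ζ in t q, f ζ := by
    rintro q hq
    apply setIntegral_piece
    intro ζ hζ
    rcases hq with ⟨hwit, hqk, _⟩ | ⟨hqk, _, hempty⟩
    · obtain ⟨hζK, hζτ⟩ := hsel q (Or.inl ⟨hwit, hqk, by assumption⟩) hwit hqk ζ hζ
      have : gM f lam k ζ = cubeAvg f q.1 ζ := by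
        unfold gM
        rw [if_pos hζK, hζτ]
      rw [this]
      exact mem_piece_value hζ
    · have hζK : ζ ∉ BsetK f lam k := fun hmem => by
        have : ζ ∈ t q ∩ BsetK f lam k := ⟨hζ, hmem⟩
        rw [hempty] at this
        exact this
      have : gM f lam k ζ = cubeAvg f (k:ℤ) ζ := by
        unfold gM
        rw [if_neg hζK]
      rw [this, ← hqk]
      exact mem_piece_value hζ
  -- conclude
  unfold cubeAvg
  congr 1
  have hcount : P.Countable := Set.to_countable P
  have : Countable ↥P := hcount.to_subtype
  have hpd : Pairwise (Function.onFun Disjoint fun q : ↥P => t q.1) := by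
    rintro ⟨q, hq⟩ ⟨q', hq'⟩ hne
    exact hdisj hq hq' (fun h => hne (Subtype.ext h))
  have hm2 : ∀ q : ↥P, MeasurableSet (t q.1) := fun q => hmeas q.1
  have hbU : dyCube n j ξ = ⋃ q : ↥P, t q.1 := by
    rw [hcover, Set.biUnion_eq_iUnion]
  rw [hbU, integral_iUnion hm2 hpd (hgint.integrableOn),
    integral_iUnion hm2 hpd (hf.integrableOn)]
  exact tsum_congr fun ⟨q, hq⟩ => hpiece q hq

lemma cubeAvg_gM_eq_hi {f : (Fin n → ℝ) → 𝒳} {lam : ℝ} (hn : n ≠ 0) (hf : Integrable f volume)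
    (hlam : 0 < lam) (k : ℕ) {ξ : Fin n → ℝ} (hξ : ξ ∉ BsetK f lam k) {j : ℤ}
    (hj : (k:ℤ) ≤ j) : cubeAvg (gM f lam k) j ξ = cubeAvg f (k:ℤ) ξ := by
  apply cubeAvg_of_const_on
  intro η hη
  have hη' : η ∈ dyCube n (k:ℤ) ξ := dyCube_subset_of_le hj ξ hη
  have hηnot : η ∉ BsetK f lam k := by
    intro hmem
    obtain ⟨hηB, hητ⟩ := (mem_BsetK_iff hn hf hlam).mp hmem
    have hξmem : ξ ∈ dyCube n (tauM f lam η) η := by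
      have h1 : dyCube n (k:ℤ) η = dyCube n (k:ℤ) ξ := dyCube_eq_of_mem hη'
      have h2 : dyCube n (k:ℤ) η ⊆ dyCube n (tauM f lam η) η := dyCube_subset_of_le hητ η
      exact h2 (h1 ▸ mem_dyCube_self (k:ℤ) ξ)
    obtain ⟨hξB, hξτ⟩ := mem_Bset_of_cube hn hf hlam hηB hξmem
    exact hξ ((mem_BsetK_iff hn hf hlam).mpr ⟨hξB, by omega⟩)
  unfold gM
  rw [if_neg hηnot]
  exact cubeAvg_congr_cube (dyCube_eq_of_mem hη')

lemma MRcube_gM_eq {f : (Fin n → ℝ) → 𝒳} {lam : ℝ} (hn : n ≠ 0) (hf : Integrable f volume)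
    (hlam : 0 < lam) (k : ℕ) {ξ : Fin n → ℝ} (hξ : ξ ∉ BsetK f lam k) :
    MRcube (gM f lam k) ξ = Rbound {y : 𝒳 | ∃ j : ℤ, j ≤ (k:ℤ) ∧ y = cubeAvg f j ξ} := by
  unfold MRcube
  congr 1
  ext y
  simp only [Set.mem_setOf_eq]
  constructor
  · rintro ⟨j, rfl⟩
    rcases le_or_gt j (k:ℤ) with hle | hlt
    · exact ⟨j, hle, cubeAvg_gM_eq hn hf hlam k hξ hle⟩
    · exact ⟨(k:ℤ), le_refl _, cubeAvg_gM_eq_hi hn hf hlam k hξ hlt.le⟩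
  · rintro ⟨j, hjk, rfl⟩
    exact ⟨j, (cubeAvg_gM_eq hn hf hlam k hξ hjk).symm⟩

lemma MRcube_eq_iSup (f : (Fin n → ℝ) → 𝒳) (ξ : Fin n → ℝ) :
    MRcube f ξ = ⨆ k : ℕ, Rbound {y : 𝒳 | ∃ j : ℤ, j ≤ (k:ℤ) ∧ y = cubeAvg f j ξ} := by
  unfold MRcube
  rw [← Rbound_iUnion_eq_iSup (S := fun k : ℕ => {y : 𝒳 | ∃ j : ℤ, j ≤ (k:ℤ) ∧ y = cubeAvg f j ξ})
    (fun k k' hkk' => fun y ⟨j, hj, hy⟩ => ⟨j, le_trans hj (by exact_mod_cast hkk'), hy⟩)]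
  congr 1
  ext y
  simp only [Set.mem_iUnion, Set.mem_setOf_eq]
  constructor
  · rintro ⟨j, rfl⟩
    exact ⟨j.toNat, j, Int.self_le_toNat j, rfl⟩
  · rintro ⟨k, j, _, rfl⟩
    exact ⟨j, rfl⟩

lemma measurable_MRcube (G : (Fin n → ℝ) → 𝒳) : Measurable (fun ξ => MRcube G ξ) := by
  have hmono : ∀ ξ : Fin n → ℝ, Monotone (fun κ : ℕ => {y : 𝒳 | ∃ j : ℤ,
      -(κ:ℤ) ≤ j ∧ j ≤ (κ:ℤ) ∧ y = cubeAvg G j ξ}) := by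
    intro ξ κ κ' hκκ' y hy
    obtain ⟨j, h1, h2, hy⟩ := hy
    have hcast : (κ:ℤ) ≤ (κ':ℤ) := by exact_mod_cast hκκ'
    exact ⟨j, by omega, by omega, hy⟩
  have hrep : (fun ξ => MRcube G ξ) = fun ξ => ⨆ κ : ℕ, Rbound {y : 𝒳 | ∃ j : ℤ,
      -(κ:ℤ) ≤ j ∧ j ≤ (κ:ℤ) ∧ y = cubeAvg G j ξ} := by
    funext ξ
    unfold MRcube
    rw [← Rbound_iUnion_eq_iSup (hmono ξ)]
    congr 1
    ext y
    simp only [Set.mem_iUnion, Set.mem_setOf_eq]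
    constructor
    · rintro ⟨j, rfl⟩
      exact ⟨j.natAbs, j, by omega, by omega, rfl⟩
    · rintro ⟨κ, j, _, _, rfl⟩
      exact ⟨j, rfl⟩
  rw [hrep]
  apply Measurable.iSup
  intro κ
  apply measurable_of_countable_factor
    (c := fun ξ => (fun i : Fin (2*κ+1) => floorsAt (-(κ:ℤ) + i) ξ : Fin (2*κ+1) → Fin n → ℤ))
  · intro b
    have h : {a : Fin n → ℝ | (fun i : Fin (2*κ+1) => floorsAt (-(κ:ℤ) + i) a) = b}
        = ⋂ i : Fin (2*κ+1), {a | floorsAt (-(κ:ℤ) + i) a = b i} := by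
      ext a
      simp only [Set.mem_setOf_eq, Set.mem_iInter, funext_iff]
    rw [h]
    exact MeasurableSet.iInter fun i => measurableSet_floors_fiber _ _
  · intro a a' hca
    have hfl : ∀ j : ℤ, -(κ:ℤ) ≤ j → j ≤ (κ:ℤ) → floorsAt j a = floorsAt j a' := by
      intro j h1 h2
      have hi : (j + (κ:ℤ)).toNat < 2*κ+1 := by omega
      have hc := congrFun hca ⟨(j + (κ:ℤ)).toNat, hi⟩
      have hc' : floorsAt (-(κ:ℤ) + (((j + (κ:ℤ)).toNat : ℕ) : ℤ)) a
          = floorsAt (-(κ:ℤ) + (((j + (κ:ℤ)).toNat : ℕ) : ℤ)) a' := hc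
      rwa [show -(κ:ℤ) + (((j + (κ:ℤ)).toNat : ℕ) : ℤ) = j by omega] at hc'
    congr 1
    ext y
    simp only [Set.mem_setOf_eq]
    constructor
    · rintro ⟨j, h1, h2, rfl⟩
      exact ⟨j, h1, h2, cubeAvg_congr_cube (dyCube_eq_of_floorsAt_eq (hfl j h1 h2))⟩
    · rintro ⟨j, h1, h2, rfl⟩
      exact ⟨j, h1, h2, (cubeAvg_congr_cube (dyCube_eq_of_floorsAt_eq (hfl j h1 h2))).symm⟩

end Main3

section Final

variable {𝒳 : Type*} [NormedAddCommGroup 𝒳] [NormedSpace ℝ 𝒳] [CompleteSpace 𝒳] {n : ℕ}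

lemma weak_main {p C : ℝ} (hp1 : 1 < p) (hC : 0 ≤ C) (hn : n ≠ 0)
    (h : ∀ f : (Fin n → ℝ) → 𝒳, MemLp f (ENNReal.ofReal p) volume →
      (∫⁻ ξ, MRcube f ξ ^ p) ^ (1 / p) ≤ ENNReal.ofReal C * eLpNorm f (ENNReal.ofReal p) volume)
    (f : (Fin n → ℝ) → 𝒳) (hf1 : MemLp f 1 volume) {lam : ℝ} (hlam : 0 < lam) :
    volume {ξ : Fin n → ℝ | ENNReal.ofReal lam < MRcube f ξ} ≤
      ENNReal.ofReal ((1 + C^p * ((2:ℝ)^n)^(p-1) * ((2:ℝ)^n + 1)) / lam)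
        * eLpNorm f 1 volume := by
  have hf : Integrable f volume := memLp_one_iff_integrable.mp hf1
  have hp0 : 0 < p := by linarith
  have hpne : ENNReal.ofReal p ≠ 0 := by
    rw [Ne, ENNReal.ofReal_eq_zero]
    exact not_le.mpr hp0
  have hνu : eLpNorm f 1 volume = nuM f Set.univ := by
    rw [eLpNorm_one_eq_lintegral_enorm, nuM_univ]
    rfl
  set νu := nuM f Set.univ with hνudef
  have hνufin : νu ≠ ⊤ := (nuM_univ_lt_top hf).ne
  set M : ℝ≥0∞ := ENNReal.ofReal (2^n * lam) with hM
  have htwone : ((2:ℝ≥0∞)^n + 1) ≠ ⊤ :=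
    ENNReal.add_ne_top.mpr ⟨ENNReal.pow_ne_top (by norm_num), ENNReal.one_ne_top⟩
  -- ℒp estimate for the good functions
  have hgp : ∀ k : ℕ, (∫⁻ ξ, (‖gM f lam k ξ‖₊ : ℝ≥0∞) ^ p)
      ≤ M ^ (p-1) * (((2:ℝ≥0∞)^n + 1) * νu) := by
    intro k
    have hpt : ∀ ξ, (‖gM f lam k ξ‖₊ : ℝ≥0∞) ^ p ≤ M ^ (p-1) * (‖gM f lam k ξ‖₊ : ℝ≥0∞) := by
      intro ξ
      have hle : (‖gM f lam k ξ‖₊ : ℝ≥0∞) ≤ M := by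
        rw [← enorm_eq_nnnorm, ← ofReal_norm]
        exact ENNReal.ofReal_le_ofReal (norm_gM_le hn hf hlam k ξ)
      rcases eq_or_ne (‖gM f lam k ξ‖₊ : ℝ≥0∞) 0 with h0 | h0
      · rw [h0, ENNReal.zero_rpow_of_pos hp0]
        positivity
      · have hne : (‖gM f lam k ξ‖₊ : ℝ≥0∞) ≠ ⊤ := ENNReal.coe_ne_top
        calc (‖gM f lam k ξ‖₊ : ℝ≥0∞) ^ p
            = (‖gM f lam k ξ‖₊ : ℝ≥0∞) ^ (p-1) * (‖gM f lam k ξ‖₊ : ℝ≥0∞) := by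
              conv_lhs => rw [show p = (p-1) + 1 by ring]
              rw [ENNReal.rpow_add _ _ h0 hne, ENNReal.rpow_one]
          _ ≤ M ^ (p-1) * (‖gM f lam k ξ‖₊ : ℝ≥0∞) :=
              mul_le_mul_left (ENNReal.rpow_le_rpow hle (by linarith)) _
    calc (∫⁻ ξ, (‖gM f lam k ξ‖₊ : ℝ≥0∞) ^ p)
        ≤ ∫⁻ ξ, M ^ (p-1) * (‖gM f lam k ξ‖₊ : ℝ≥0∞) := lintegral_mono hpt
      _ = M ^ (p-1) * ∫⁻ ξ, (‖gM f lam k ξ‖₊ : ℝ≥0∞) :=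
          lintegral_const_mul' _ _
            (ENNReal.rpow_ne_top_of_nonneg (by linarith) ENNReal.ofReal_ne_top)
      _ ≤ M ^ (p-1) * (((2:ℝ≥0∞)^n + 1) * νu) :=
          mul_le_mul_right (lintegral_nnnorm_gM_le hn hf hlam k) _
  have hgpfin : M ^ (p-1) * (((2:ℝ≥0∞)^n + 1) * νu) < ⊤ :=
    ENNReal.mul_lt_top
      (ENNReal.rpow_lt_top_of_nonneg (by linarith) ENNReal.ofReal_ne_top)
      (ENNReal.mul_lt_top htwone.lt_top hνufin.lt_top)
  have hmem : ∀ k : ℕ, MemLp (gM f lam k) (ENNReal.ofReal p) volume := by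
    intro k
    refine ⟨(stronglyMeasurable_gM hn hf hlam k).aestronglyMeasurable, ?_⟩
    rw [eLpNorm_eq_lintegral_rpow_enorm_toReal hpne ENNReal.ofReal_ne_top,
      ENNReal.toReal_ofReal hp0.le]
    exact ENNReal.rpow_lt_top_of_nonneg (by positivity)
      (lt_of_le_of_lt (hgp k) hgpfin).ne
  -- Chebyshev for each k
  have hcheb : ∀ k : ℕ, volume {ξ : Fin n → ℝ | ENNReal.ofReal lam < MRcube (gM f lam k) ξ}
      ≤ (ENNReal.ofReal (C ^ p) * (M ^ (p-1) * (((2:ℝ≥0∞)^n + 1) * νu)))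
        / ENNReal.ofReal (lam ^ p) := by
    intro k
    have happ := h (gM f lam k) (hmem k)
    have hLp : (∫⁻ ξ, MRcube (gM f lam k) ξ ^ p)
        ≤ ENNReal.ofReal (C ^ p) * (M ^ (p-1) * (((2:ℝ≥0∞)^n + 1) * νu)) := by
      have h1 : ((∫⁻ ξ, MRcube (gM f lam k) ξ ^ p) ^ (1/p)) ^ p
          ≤ (ENNReal.ofReal C * eLpNorm (gM f lam k) (ENNReal.ofReal p) volume) ^ p :=
        ENNReal.rpow_le_rpow happ hp0.le
      rw [← ENNReal.rpow_mul, one_div, inv_mul_cancel₀ hp0.ne', ENNReal.rpow_one] at h1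
      have h2 : (ENNReal.ofReal C * eLpNorm (gM f lam k) (ENNReal.ofReal p) volume) ^ p
          = (ENNReal.ofReal C) ^ p * (eLpNorm (gM f lam k) (ENNReal.ofReal p) volume) ^ p :=
        ENNReal.mul_rpow_of_nonneg _ _ hp0.le
      have h3 : (eLpNorm (gM f lam k) (ENNReal.ofReal p) volume) ^ p
          = ∫⁻ ξ, (‖gM f lam k ξ‖₊ : ℝ≥0∞) ^ p := by
        rw [eLpNorm_eq_lintegral_rpow_enorm_toReal hpne ENNReal.ofReal_ne_top,
          ENNReal.toReal_ofReal hp0.le, ← ENNReal.rpow_mul, one_div,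
          inv_mul_cancel₀ hp0.ne', ENNReal.rpow_one]
        rfl
      calc (∫⁻ ξ, MRcube (gM f lam k) ξ ^ p) ≤ _ := h1
        _ = (ENNReal.ofReal C) ^ p * ∫⁻ ξ, (‖gM f lam k ξ‖₊ : ℝ≥0∞) ^ p := by rw [h2, h3]
        _ ≤ (ENNReal.ofReal C) ^ p * (M ^ (p-1) * (((2:ℝ≥0∞)^n + 1) * νu)) :=
            mul_le_mul_right (hgp k) _
        _ = ENNReal.ofReal (C ^ p) * (M ^ (p-1) * (((2:ℝ≥0∞)^n + 1) * νu)) := by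
            rw [ENNReal.ofReal_rpow_of_nonneg hC hp0.le]
    have hppos : (0:ℝ≥0∞) < ENNReal.ofReal (lam ^ p) :=
      ENNReal.ofReal_pos.mpr (Real.rpow_pos_of_pos hlam p)
    have hchain : volume {ξ : Fin n → ℝ | ENNReal.ofReal lam < MRcube (gM f lam k) ξ}
        * ENNReal.ofReal (lam ^ p)
        ≤ ENNReal.ofReal (C ^ p) * (M ^ (p-1) * (((2:ℝ≥0∞)^n + 1) * νu)) := by
      rw [mul_comm]
      calc ENNReal.ofReal (lam ^ p)
            * volume {ξ : Fin n → ℝ | ENNReal.ofReal lam < MRcube (gM f lam k) ξ}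
          = ∫⁻ _ in {ξ : Fin n → ℝ | ENNReal.ofReal lam < MRcube (gM f lam k) ξ},
              ENNReal.ofReal (lam ^ p) := (setLIntegral_const _ _).symm
        _ ≤ ∫⁻ ξ in {ξ : Fin n → ℝ | ENNReal.ofReal lam < MRcube (gM f lam k) ξ},
              MRcube (gM f lam k) ξ ^ p := by
            apply setLIntegral_mono ((measurable_MRcube _).pow_const p)
            intro ξ hξ
            rw [← ENNReal.ofReal_rpow_of_nonneg hlam.le hp0.le]
            exact ENNReal.rpow_le_rpow (le_of_lt hξ) hp0.le
        _ ≤ ∫⁻ ξ, MRcube (gM f lam k) ξ ^ p := setLIntegral_le_lintegral _ _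
        _ ≤ _ := hLp
    exact (ENNReal.le_div_iff_mul_le (Or.inl hppos.ne')
      (Or.inl ENNReal.ofReal_ne_top)).mpr hchain
  -- decomposition of the superlevel set
  have hsubset : {ξ : Fin n → ℝ | ENNReal.ofReal lam < MRcube f ξ}
      ⊆ Bset f lam ∪ ⋃ k : ℕ,
        ({ξ : Fin n → ℝ | ENNReal.ofReal lam < MRcube (gM f lam k) ξ} \ Bset f lam) := by
    intro ξ hξ
    by_cases hB : ξ ∈ Bset f lam
    · exact Or.inl hB
    · right
      have hnotK : ∀ k : ℕ, ξ ∉ BsetK f lam k := fun k hk => hB (BsetK_subset f lam k hk)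
      have heq : MRcube f ξ = ⨆ k : ℕ, MRcube (gM f lam k) ξ := by
        rw [MRcube_eq_iSup f ξ]
        exact iSup_congr fun k => (MRcube_gM_eq hn hf hlam k (hnotK k)).symm
      rw [Set.mem_setOf_eq, heq, lt_iSup_iff] at hξ
      obtain ⟨k, hk⟩ := hξ
      exact Set.mem_iUnion.mpr ⟨k, hk, hB⟩
  have hEmono : Monotone (fun k : ℕ =>
      {ξ : Fin n → ℝ | ENNReal.ofReal lam < MRcube (gM f lam k) ξ} \ Bset f lam) := by
    intro k k' hkk' ξ hξ
    obtain ⟨hlt, hB⟩ := hξ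
    have hnotK : ∀ κ : ℕ, ξ ∉ BsetK f lam κ := fun κ hκ => hB (BsetK_subset f lam κ hκ)
    refine ⟨?_, hB⟩
    rw [Set.mem_setOf_eq, MRcube_gM_eq hn hf hlam k' (hnotK k')]
    rw [Set.mem_setOf_eq, MRcube_gM_eq hn hf hlam k (hnotK k)] at hlt
    refine lt_of_lt_of_le hlt (Rbound_mono ?_)
    rintro y ⟨j, hj, rfl⟩
    exact ⟨j, le_trans hj (by exact_mod_cast hkk'), rfl⟩
  have hbound : volume {ξ : Fin n → ℝ | ENNReal.ofReal lam < MRcube f ξ}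
      ≤ volume (Bset f lam)
        + (ENNReal.ofReal (C ^ p) * (M ^ (p-1) * (((2:ℝ≥0∞)^n + 1) * νu)))
          / ENNReal.ofReal (lam ^ p) := by
    calc volume {ξ : Fin n → ℝ | ENNReal.ofReal lam < MRcube f ξ}
        ≤ volume (Bset f lam ∪ ⋃ k : ℕ,
            ({ξ : Fin n → ℝ | ENNReal.ofReal lam < MRcube (gM f lam k) ξ} \ Bset f lam)) :=
          measure_mono hsubset
      _ ≤ volume (Bset f lam) + volume (⋃ k : ℕ,
            ({ξ : Fin n → ℝ | ENNReal.ofReal lam < MRcube (gM f lam k) ξ} \ Bset f lam)) :=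
          measure_union_le _ _
      _ ≤ _ := by
          apply add_le_add_right
          rw [Directed.measure_iUnion (hEmono.directed_le)]
          apply iSup_le
          intro k
          exact le_trans (measure_mono Set.diff_subset) (hcheb k)
  -- the measure of the bad set
  have hBbound : volume (Bset f lam) ≤ νu / ENNReal.ofReal lam := by
    have h1 := lam_mul_volume_Bset_le hn hf hlam
    rw [mul_comm] at h1
    exact (ENNReal.le_div_iff_mul_le (Or.inl (ENNReal.ofReal_pos.mpr hlam).ne')
      (Or.inl ENNReal.ofReal_ne_top)).mpr h1
  -- final arithmetic
  have harith : νu / ENNReal.ofReal lam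
      + (ENNReal.ofReal (C ^ p) * (M ^ (p-1) * (((2:ℝ≥0∞)^n + 1) * νu)))
        / ENNReal.ofReal (lam ^ p)
      ≤ ENNReal.ofReal ((1 + C^p * ((2:ℝ)^n)^(p-1) * ((2:ℝ)^n + 1)) / lam) * νu := by
    have e1 : νu / ENNReal.ofReal lam = ENNReal.ofReal (1 / lam) * νu := by
      rw [ENNReal.ofReal_div_of_pos hlam, ENNReal.ofReal_one, one_div, div_eq_mul_inv,
        mul_comm]
    have e2 : ((2:ℝ≥0∞)^n + 1) = ENNReal.ofReal ((2:ℝ)^n + 1) := by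
      rw [ENNReal.ofReal_add (by positivity) zero_le_one, ENNReal.ofReal_pow (by norm_num),
        ENNReal.ofReal_one]
      norm_num
    have e3 : M ^ (p-1) = ENNReal.ofReal ((2^n * lam) ^ (p-1)) := by
      rw [hM, ENNReal.ofReal_rpow_of_nonneg (by positivity) (by linarith)]
    have e4 : ENNReal.ofReal (C ^ p) * (M ^ (p-1) * (((2:ℝ≥0∞)^n + 1) * νu))
        = ENNReal.ofReal (C ^ p * ((2^n * lam) ^ (p-1) * ((2:ℝ)^n + 1))) * νu := by
      rw [e2, e3, ← mul_assoc (ENNReal.ofReal ((2^n * lam) ^ (p-1))),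
        ← ENNReal.ofReal_mul (by positivity), ← mul_assoc, ← ENNReal.ofReal_mul (by positivity)]
    have e5 : (ENNReal.ofReal (C ^ p * ((2^n * lam) ^ (p-1) * ((2:ℝ)^n + 1))) * νu)
        / ENNReal.ofReal (lam ^ p)
        = ENNReal.ofReal (C ^ p * ((2^n * lam) ^ (p-1) * ((2:ℝ)^n + 1)) / lam ^ p) * νu := by
      rw [ENNReal.ofReal_div_of_pos (Real.rpow_pos_of_pos hlam p), div_eq_mul_inv,
        div_eq_mul_inv, mul_right_comm]
    rw [e1, e4, e5, ← add_mul, ← ENNReal.ofReal_add (by positivity) (by positivity)]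
    apply mul_le_mul_left
    apply ENNReal.ofReal_le_ofReal
    -- now a purely real computation
    have hpow : ((2:ℝ)^n * lam) ^ (p-1) = ((2:ℝ)^n) ^ (p-1) * lam ^ (p-1) :=
      Real.mul_rpow (by positivity) hlam.le
    have hlp : lam ^ p = lam ^ (p-1) * lam := by
      conv_lhs => rw [show p = (p-1) + 1 by ring]
      rw [Real.rpow_add hlam, Real.rpow_one]
    have hlp1 : (0:ℝ) < lam ^ (p-1) := Real.rpow_pos_of_pos hlam _
    rw [hpow, hlp]
    have hl0 : lam ≠ 0 := hlam.ne'
    have hl1 : lam ^ (p-1) ≠ 0 := hlp1.ne'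
    apply le_of_eq
    field_simp
  calc volume {ξ : Fin n → ℝ | ENNReal.ofReal lam < MRcube f ξ}
      ≤ volume (Bset f lam)
        + (ENNReal.ofReal (C ^ p) * (M ^ (p-1) * (((2:ℝ≥0∞)^n + 1) * νu)))
          / ENNReal.ofReal (lam ^ p) := hbound
    _ ≤ νu / ENNReal.ofReal lam
        + (ENNReal.ofReal (C ^ p) * (M ^ (p-1) * (((2:ℝ≥0∞)^n + 1) * νu)))
          / ENNReal.ofReal (lam ^ p) := add_le_add_left hBbound _
    _ ≤ ENNReal.ofReal ((1 + C^p * ((2:ℝ)^n)^(p-1) * ((2:ℝ)^n + 1)) / lam) * νu := harith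
    _ = ENNReal.ofReal ((1 + C^p * ((2:ℝ)^n)^(p-1) * ((2:ℝ)^n + 1)) / lam)
        * eLpNorm f 1 volume := by rw [hνu]

end Final


/-- If `𝒳` has `RMF_p` w.r.t. the standard dyadic cubes on `ℝⁿ` for some `1 < p < ∞`,
then the Rademacher maximal operator satisfies a weak type `(1,1)` inequality. -/
theorem statement4 {𝒳 : Type*} [NormedAddCommGroup 𝒳] [NormedSpace ℝ 𝒳] [CompleteSpace 𝒳]
    (n : ℕ) (p : ℝ) (hp1 : 1 < p)
    (h : ∃ C : ℝ, 0 ≤ C ∧ ∀ f : (Fin n → ℝ) → 𝒳, MemLp f (ENNReal.ofReal p) volume →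
      (∫⁻ ξ, MRcube f ξ ^ p) ^ (1 / p) ≤
        ENNReal.ofReal C * eLpNorm f (ENNReal.ofReal p) volume) :
    ∃ C : ℝ, 0 ≤ C ∧ ∀ f : (Fin n → ℝ) → 𝒳, MemLp f 1 volume → ∀ lam : ℝ, 0 < lam →
      volume {ξ : Fin n → ℝ | ENNReal.ofReal lam < MRcube f ξ} ≤
        ENNReal.ofReal (C / lam) * eLpNorm f 1 volume := by
  obtain ⟨C, hC0, hC⟩ := h
  rcases eq_or_ne n 0 with hn0 | hn
  · subst hn0
    refine ⟨1, zero_le_one, ?_⟩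
    intro f hf lam hlam
    have hfi : Integrable f volume := memLp_one_iff_integrable.mp hf
    have hcube : ∀ (j : ℤ) (ξ : Fin 0 → ℝ), cubeAvg f j ξ = ∫ η, f η := by
      intro j ξ
      unfold cubeAvg
      have h1 : dyCube 0 j ξ = Set.univ := by
        ext η
        simp only [Set.mem_univ, iff_true]
        exact fun i => i.elim0
      rw [h1, Measure.restrict_univ]
      simp
    have hRb : ∀ ξ : Fin 0 → ℝ, MRcube f ξ ≤ ENNReal.ofReal ‖∫ η, f η‖ := by
      intro ξ
      unfold MRcube
      have hset : {y : 𝒳 | ∃ j : ℤ, y = cubeAvg f j ξ} = {∫ η, f η} := by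
        ext y
        simp only [Set.mem_setOf_eq, Set.mem_singleton_iff]
        constructor
        · rintro ⟨j, rfl⟩
          exact hcube j ξ
        · intro hy
          exact ⟨0, by rw [hy, hcube]⟩
      rw [hset]
      apply Rbound_le_ofReal
      refine ⟨norm_nonneg _, ?_⟩
      intro N y l hy
      have hyc : (fun j => l j • y j) = fun j => l j • (∫ η, f η) := by
        funext j
        rw [Set.mem_singleton_iff.mp (hy j)]
      rw [hyc, radAvg_smul_const]
    rcases Set.eq_empty_or_nonempty {ξ : Fin 0 → ℝ | ENNReal.ofReal lam < MRcube f ξ} with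
      hS | ⟨ξ₀, hξ₀⟩
    · rw [hS]
      simp
    · have hlt : ENNReal.ofReal lam < ENNReal.ofReal ‖∫ η, f η‖ :=
        lt_of_lt_of_le hξ₀ (hRb ξ₀)
      have hnorm : lam < ‖∫ η, f η‖ := by
        by_contra hcon
        push_neg at hcon
        exact absurd (ENNReal.ofReal_le_ofReal hcon) (not_le.mpr hlt)
      have hel : ENNReal.ofReal lam ≤ eLpNorm f 1 volume := by
        have h1 : ‖∫ η, f η‖ ≤ (∫⁻ η, (‖f η‖₊ : ℝ≥0∞)).toReal := by
          have h2 := norm_integral_le_lintegral_norm f (μ := volume)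
          simp_rw [ofReal_norm, enorm_eq_nnnorm] at h2
          exact h2
        rw [eLpNorm_one_eq_lintegral_enorm]
        have h2 : ENNReal.ofReal ‖∫ η, f η‖
            ≤ ENNReal.ofReal ((∫⁻ η, (‖f η‖₊ : ℝ≥0∞)).toReal) := ENNReal.ofReal_le_ofReal h1
        rw [ENNReal.ofReal_toReal (a := ∫⁻ η, (‖f η‖₊ : ℝ≥0∞)) hfi.2.ne] at h2
        exact le_trans (ENNReal.ofReal_le_ofReal hnorm.le) h2
      have huniv : volume (Set.univ : Set (Fin 0 → ℝ)) = 1 := by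
        rw [volume_pi, Measure.pi_univ]
        simp
      calc volume {ξ : Fin 0 → ℝ | ENNReal.ofReal lam < MRcube f ξ}
          ≤ volume (Set.univ : Set (Fin 0 → ℝ)) := measure_mono (Set.subset_univ _)
        _ = 1 := huniv
        _ = ENNReal.ofReal (1/lam) * ENNReal.ofReal lam := by
            rw [← ENNReal.ofReal_mul (by positivity), one_div, inv_mul_cancel₀ hlam.ne',
              ENNReal.ofReal_one]
        _ ≤ ENNReal.ofReal (1/lam) * eLpNorm f 1 volume := mul_le_mul_right hel _
  · exact ⟨1 + C^p * ((2:ℝ)^n)^(p-1) * ((2:ℝ)^n + 1), by positivity,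
      fun f hf lam hlam => weak_main hp1 hC0 hn hC f hf hlam⟩


end RMF
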